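/- arXiv:1304.6858 — 8 statements merged into one kernel-verified Lean document; each statement's English description precedes it below -/
import Mathlib

section
/- If an infinite binary sequence X is computably random (no computable martingale succeeds on X), then X is not total strongly predictable. -/
/-- The first `n` bits of the infinite binary sequence `X` (as a finite binary string). -/
def pre (X : ℕ → Bool) (n : ℕ) : List Bool := (List.range n).map X

/-- A martingale: nonnegative betting strategy with the fairness condition. -/
def IsMartingale (B : List Bool → ℝ) : Prop :=
  (∀ x, 0 ≤ B x) ∧ ∀ x, B (x ++ [false]) + B (x ++ [true]) = 2 * B x

/-- `B` succeeds on `X`: the capital along `X` is unbounded. -/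
def Succeeds (B : List Bool → ℝ) (X : ℕ → Bool) : Prop := ∀ C : ℝ, ∃ n, C < B (pre X n)

/-- A computable martingale: `{(x,q) | q < B x}` is decidable. -/
def ComputableMartingale (B : List Bool → ℝ) : Prop :=
  IsMartingale B ∧ ∃ g : List Bool × ℚ → Bool, Computable g ∧
    ∀ p : List Bool × ℚ, g p = true ↔ (p.2 : ℝ) < B p.1

def ComputablyRandom (X : ℕ → Bool) : Prop :=
  ∀ B : List Bool → ℝ, ComputableMartingale B → ¬ Succeeds B X

def TotalStronglyPredictable (X : ℕ → Bool) : Prop :=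
  ∃ F : List Bool → Option Bool, Computable F ∧
    (∀ n b, F (pre X n) = some b → b = X n) ∧
    {n : ℕ | F (pre X n) ≠ none}.Infinite

def StronglyPredictable (X : ℕ → Bool) : Prop :=
  ∃ F : List Bool →. Option Bool, Partrec F ∧
    (∀ n, (F (pre X n)).Dom) ∧
    (∀ n b, some b ∈ F (pre X n) → b = X n) ∧
    {n : ℕ | ∃ b, some b ∈ F (pre X n)}.Infinite

def PartialComputableMartingale (B : List Bool →. ℚ) : Prop :=
  Partrec B ∧
  (∀ x q, q ∈ B x → 0 ≤ q) ∧
  (∀ x y : List Bool, x <+: y → (B y).Dom → (B x).Dom) ∧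
  (∀ x : List Bool, (B x).Dom → ((B (x ++ [false])).Dom ↔ (B (x ++ [true])).Dom)) ∧
  (∀ (x : List Bool) (q q₀ q₁ : ℚ), q ∈ B x → q₀ ∈ B (x ++ [false]) → q₁ ∈ B (x ++ [true]) →
    q₀ + q₁ = 2 * q)

def PSucceeds (B : List Bool →. ℚ) (X : ℕ → Bool) : Prop :=
  (∀ n, (B (pre X n)).Dom) ∧ ∀ C : ℚ, ∃ n, ∃ q ∈ B (pre X n), C < q

def PartialComputablyRandom (X : ℕ → Bool) : Prop :=
  ∀ B : List Bool →. ℚ, PartialComputableMartingale B → ¬ PSucceeds B X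

def FiniteStateStronglyPredictable (X : ℕ → Bool) : Prop :=
  ∃ (Q : Type) (_ : Fintype Q) (δ : Q → Bool → Q) (q₀ : Q) (f : Q → Option Bool),
    (∀ n b, f ((pre X n).foldl δ q₀) = some b → b = X n) ∧
    {n : ℕ | f ((pre X n).foldl δ q₀) ≠ none}.Infinite

/-- A prefix-free machine: a partial computable function with prefix-free domain. -/
def IsPrefixFreeMachine (M : List Bool →. List Bool) : Prop :=
  Partrec M ∧ ∀ p q : List Bool, (M p).Dom → (M q).Dom → p <+: q → p = q

/-- An optimal prefix-free machine. -/
def IsOptimalMachine (U : List Bool →. List Bool) : Prop :=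
  IsPrefixFreeMachine U ∧ ∀ M : List Bool →. List Bool, IsPrefixFreeMachine M →
    ∃ d : ℕ, ∀ p : List Bool, (M p).Dom →
      ∃ q : List Bool, q.length ≤ p.length + d ∧ U q = M p

/-- Program-size (Kolmogorov) complexity of `x` with respect to `U`. -/
noncomputable def KC (U : List Bool →. List Bool) (x : List Bool) : ℕ :=
  sInf {n : ℕ | ∃ p : List Bool, p.length = n ∧ x ∈ U p}

/-- The partition function `Z(T)` of `U` at temperature `T`. -/
noncomputable def ZT (U : List Bool →. List Bool) (T : ℝ) : ℝ :=
  ∑' p : {p : List Bool // (U p).Dom}, (2 : ℝ) ^ (-((p.1.length : ℝ)) / T)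

/-- Chaitin's Ω number of `U`. -/
noncomputable def Omega (U : List Bool →. List Bool) : ℝ :=
  ∑' p : {p : List Bool // (U p).Dom}, (2 : ℝ) ^ (-((p.1.length : ℝ)))

/-- The `n`-th bit (0-indexed) of the base-two expansion (with infinitely many zeros)
of the fractional part of `α`. -/
noncomputable def binDigit (α : ℝ) (n : ℕ) : Bool :=
  decide (⌊α * 2 ^ (n + 1)⌋ % 2 = 1)

def ComputableReal (T : ℝ) : Prop :=
  ∃ f : ℕ → ℚ, Computable f ∧ ∀ n : ℕ, |T - (f n : ℝ)| < (2 : ℝ) ^ (-(n : ℤ))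

def WeaklyChaitinRandom (U : List Bool →. List Bool) (X : ℕ → Bool) : Prop :=
  ∃ c : ℕ, ∀ n : ℕ, 1 ≤ n → (n : ℤ) - c ≤ (KC U (pre X n) : ℤ)

def WeaklyChaitinTRandom (U : List Bool →. List Bool) (T : ℝ) (X : ℕ → Bool) : Prop :=
  ∃ c : ℕ, ∀ n : ℕ, 1 ≤ n → T * n - c ≤ (KC U (pre X n) : ℝ)

def StrictlyTCompressible (U : List Bool →. List Bool) (T : ℝ) (X : ℕ → Bool) : Prop :=
  ∃ d : ℕ, ∀ n : ℕ, 1 ≤ n → (KC U (pre X n) : ℝ) ≤ T * n + d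

def StrictlyChaitinTRandom (U : List Bool →. List Bool) (T : ℝ) (X : ℕ → Bool) : Prop :=
  WeaklyChaitinTRandom U T X ∧ StrictlyTCompressible U T X



namespace CRNTSP
open Encodable
open Encodable

def eZ : ℤ → ℕ
  | .ofNat n => 2 * n
  | .negSucc n => 2 * n + 1

theorem encode_int (z : ℤ) : @encode ℤ _ z = eZ z := by
  cases z <;> with_unfolding_all rfl

theorem encode_rat (q : ℚ) : @encode ℚ Rat.instEncodable q = Nat.pair (eZ q.num) q.den := by
  rcases q with ⟨n, d, h1, h2⟩
  show @encode (Σ n : ℤ, { d : ℕ // 0 < d ∧ n.natAbs.Coprime d }) _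
      ⟨n, d, Nat.pos_of_ne_zero h1, h2⟩ = _
  rw [Encodable.encode_sigma_val, Encodable.Subtype.encode_eq, encode_int]
  rfl

def gstep (p : ℕ × ℕ) : ℕ × ℕ := if p.2 = 0 then p else (p.2, p.1 % p.2)

theorem gstep_snd : ∀ (n : ℕ) (p : ℕ × ℕ), p.2 ≤ n → (gstep^[n] p).2 = 0 := by
  intro n
  induction n with
  | zero => intro p hp; simpa using Nat.le_zero.mp hp
  | succ n ih =>
    intro p hp
    rw [Function.iterate_succ_apply]
    by_cases h : p.2 = 0
    · apply ih; simp [gstep, h]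
    · apply ih
      have : p.1 % p.2 < p.2 := Nat.mod_lt _ (Nat.pos_of_ne_zero h)
      simp only [gstep, if_neg h]
      omega

theorem gstep_gcd : ∀ (n : ℕ) (p : ℕ × ℕ),
    Nat.gcd (gstep^[n] p).2 (gstep^[n] p).1 = Nat.gcd p.2 p.1 := by
  intro n
  induction n with
  | zero => intro p; rfl
  | succ n ih =>
    intro p
    rw [Function.iterate_succ_apply, ih]
    by_cases h : p.2 = 0
    · simp [gstep, h]
    · simp only [gstep, if_neg h]
      exact (Nat.gcd_rec _ _).symm

def gcdIter (p : ℕ × ℕ) : ℕ := (gstep^[p.2] p).1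

theorem gcdIter_eq (p : ℕ × ℕ) : gcdIter p = Nat.gcd p.2 p.1 := by
  have h1 := gstep_snd p.2 p le_rfl
  have h2 := gstep_gcd p.2 p
  rw [h1, Nat.gcd_zero_left] at h2
  exact h2

theorem gcdIter_primrec : Primrec gcdIter := by
  have hstep : Primrec gstep := by
    exact Primrec.ite (Primrec.eq.comp Primrec.snd (Primrec.const 0)) Primrec.id
      (Primrec.pair Primrec.snd (Primrec.nat_mod.comp Primrec.fst Primrec.snd))
  have : Primrec fun p : ℕ × ℕ => gstep^[p.2] p :=
    Primrec.nat_iterate Primrec.snd Primrec.id (hstep.comp Primrec.snd).to₂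
  exact Primrec.fst.comp this

def nabs (a : ℕ) : ℕ := if a.bodd then a.div2 + 1 else a.div2

theorem nabs_primrec : Primrec nabs :=
  Primrec.ite (PrimrecPred.of_eq (Primrec.eq.comp Primrec.nat_bodd (Primrec.const true))
      (fun a => by simp))
    (Primrec.succ.comp Primrec.nat_div2) Primrec.nat_div2

def zOf (a : ℕ) : ℤ := if a.bodd then Int.negSucc a.div2 else Int.ofNat a.div2

theorem eZ_zOf (a : ℕ) : eZ (zOf a) = a := by
  have := Nat.bodd_add_div2 a
  by_cases h : a.bodd <;> simp [zOf, h, eZ] at this ⊢ <;> omega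

theorem nabs_eZ (z : ℤ) : nabs (eZ z) = z.natAbs := by
  cases z with
  | ofNat n => simp [eZ, nabs]
  | negSucc n => simp [eZ, nabs]

theorem bodd_eZ (z : ℤ) : (eZ z).bodd = decide (z < 0) := by
  cases z with
  | ofNat n => simp [eZ]
  | negSucc n => simp [eZ, Int.negSucc_lt_zero]

theorem natAbs_zOf (a : ℕ) : (zOf a).natAbs = nabs a := by
  by_cases h : a.bodd <;> simp [zOf, nabs, h]

def memS (n : ℕ) : Bool :=
  decide (0 < n.unpair.2) && (gcdIter (n.unpair.2, nabs n.unpair.1) == 1)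

theorem memS_primrec : Primrec memS := by
  have h1 : Primrec fun n : ℕ => n.unpair.1 := Primrec.fst.comp Primrec.unpair
  have h2 : Primrec fun n : ℕ => n.unpair.2 := Primrec.snd.comp Primrec.unpair
  have hb : Primrec fun n : ℕ => decide (0 < n.unpair.2) :=
    (Primrec.nat_lt.comp (Primrec.const 0) h2).decide
  have hc : Primrec fun n : ℕ => (gcdIter (n.unpair.2, nabs n.unpair.1) == 1) :=
    Primrec.beq.comp (gcdIter_primrec.comp (Primrec.pair h2 (nabs_primrec.comp h1)))
      (Primrec.const 1)
  exact (Primrec.dom_bool₂ (· && ·)).comp hb hc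

theorem memS_iff (n : ℕ) :
    memS n = true ↔ n ∈ Set.range (@encode ℚ Rat.instEncodable) := by
  constructor
  · intro h
    simp only [memS, Bool.and_eq_true, decide_eq_true_eq, beq_iff_eq] at h
    obtain ⟨hd, hg⟩ := h
    rw [gcdIter_eq] at hg
    refine ⟨⟨zOf n.unpair.1, n.unpair.2, Nat.pos_iff_ne_zero.mp hd, ?_⟩, ?_⟩
    · rwa [Nat.Coprime, natAbs_zOf]
    · rw [encode_rat]
      show Nat.pair (eZ (zOf n.unpair.1)) n.unpair.2 = n
      rw [eZ_zOf, Nat.pair_unpair]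
  · rintro ⟨q, rfl⟩
    rw [encode_rat]
    simp only [memS, Nat.unpair_pair, Bool.and_eq_true, decide_eq_true_eq, beq_iff_eq]
    refine ⟨q.pos, ?_⟩
    rw [gcdIter_eq, nabs_eZ]
    exact q.reduced

abbrev S : Set ℕ := Set.range (@encode ℚ Rat.instEncodable)

instance instSdec : DecidablePred (· ∈ S) := decidableRangeEncode ℚ
instance instSinf : Infinite S :=
  Infinite.of_injective _ (Equiv.ofInjective _ encode_injective).injective
noncomputable instance instSden : Denumerable S := Nat.Subtype.denumerable S

theorem key (q : ℚ) :
    ((Nat.Subtype.ofNat S (@encode ℚ (Primcodable.toEncodable) q) : S) : ℕ)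
      = Nat.pair (eZ q.num) q.den := by
  rw [← encode_rat]
  have hA : @encode ℚ (Primcodable.toEncodable) q
      = @encode S instSden.toEncodable (equivRangeEncode ℚ q) := by
    with_unfolding_all rfl
  rw [hA]
  have hC : ∀ k : ℕ, Denumerable.ofNat S k = Nat.Subtype.ofNat S k := fun k =>
    Denumerable.ofNat_of_decode (by with_unfolding_all rfl)
  rw [← hC, Denumerable.ofNat_encode]
  rfl


-- memS_iff adapter
theorem memS_iff' (n : ℕ) : memS n = true ↔ n ∈ S := memS_iff n

noncomputable def base : Part ℕ := Nat.rfind (fun m => Part.some (memS m))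
noncomputable def lstep (v : ℕ) : Part ℕ :=
  (Nat.rfind (fun m => Part.some (memS (v + 1 + m)))).map (fun m => v + 1 + m)
noncomputable def F0 : ℕ →. ℕ := fun k => Nat.rec base (fun _ ih => ih.bind lstep) k

theorem F0_partrec : Partrec F0 := by
  have hbase : Partrec (fun _ : ℕ => base) := Partrec.const' base
  have hmem : Computable memS := memS_primrec.to_comp
  have hadd : Computable₂ ((· + ·) : ℕ → ℕ → ℕ) := Primrec.nat_add.to_comp
  have hvm : Computable (fun p : ℕ × ℕ => p.1 + 1 + p.2) :=
    hadd.comp (hadd.comp Computable.fst (Computable.const 1)) Computable.snd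
  have hlstep : Partrec lstep := by
    have h1 : Partrec (fun v : ℕ => Nat.rfind (fun m => Part.some (memS (v + 1 + m)))) := by
      apply Partrec.rfind
      exact Computable₂.partrec₂ (Computable₂.mk (hmem.comp hvm))
    exact h1.map (Computable₂.mk hvm)
  have hh : Partrec₂ (fun (_ : ℕ) (p : ℕ × ℕ) => lstep p.2) :=
    (hlstep.comp (Computable.snd.comp Computable.snd)).to₂
  have := Partrec.nat_rec (Computable.id (α := ℕ)) hbase hh
  exact this.of_eq fun n => by simp only [F0, id]

theorem nth_mem_F0 : ∀ k : ℕ, ((Nat.Subtype.ofNat S k : S) : ℕ) ∈ F0 k := by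
  intro k
  induction k with
  | zero =>
    show _ ∈ base
    rw [base]; refine Nat.mem_rfind.mpr ?_
    constructor
    · simp only [Part.mem_some_iff]
      exact ((memS_iff' _).mpr (Nat.Subtype.ofNat S 0).2).symm ▸ rfl
    · intro m hm
      simp only [Part.mem_some_iff]
      by_contra hne
      have hmS : m ∈ S := by
        apply (memS_iff' m).mp
        revert hne; cases memS m <;> simp
      have h2 : ((Nat.Subtype.ofNat S 0 : S) : ℕ) ≤ m :=
        (bot_le : (⊥ : S) ≤ ⟨m, hmS⟩)
      omega
  | succ k ih =>
    show _ ∈ (F0 k).bind lstep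
    refine Part.mem_bind_iff.mpr ⟨_, ih, ?_⟩
    set x := Nat.Subtype.ofNat S k with hx
    have hsucc : Nat.Subtype.ofNat S (k+1) = Nat.Subtype.succ x := rfl
    set y := Nat.Subtype.succ x with hy
    have hlt : (x : ℕ) < (y : ℕ) := Nat.Subtype.lt_succ_self x
    have hyS : (y : ℕ) ∈ S := y.2
    rw [hsucc, lstep]
    refine (Part.mem_map_iff _).mpr ⟨(y : ℕ) - ((x:ℕ) + 1), ?_, by omega⟩
    refine Nat.mem_rfind.mpr ?_
    constructor
    · have heq : (x:ℕ) + 1 + ((y:ℕ) - ((x:ℕ)+1)) = (y:ℕ) := by omega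
      rw [heq]
      simp only [Part.mem_some_iff]
      exact ((memS_iff' _).mpr hyS).symm
    · intro m hm
      simp only [Part.mem_some_iff]
      by_contra hne
      have hmS : ((x:ℕ) + 1 + m) ∈ S := by
        apply (memS_iff' _).mp
        revert hne; cases memS ((x:ℕ)+1+m) <;> simp
      have hgt : x < (⟨(x:ℕ)+1+m, hmS⟩ : S) := by
        show (x:ℕ) < (x:ℕ)+1+m; omega
      have h2 : (y : ℕ) ≤ (x:ℕ)+1+m := Nat.Subtype.succ_le_of_lt hgt
      omega

theorem nth_comp : Computable (fun k => ((Nat.Subtype.ofNat S k : S) : ℕ)) :=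
  Partrec.of_eq_tot F0_partrec nth_mem_F0


variable (F : List Bool → Option Bool)

def stepF (x : List Bool) (i : ℕ) (s : List Bool × ℕ × Bool) : List Bool × ℕ × Bool :=
  (s.1 ++ [x.getD i false],
   s.2.1 + (if F s.1 = some (x.getD i false) then 1 else 0),
   s.2.2 && !(decide (F s.1 = some (!(x.getD i false)))))

def scan (x : List Bool) : ℕ → List Bool × ℕ × Bool
  | 0 => ([], 0, true)
  | i+1 => stepF F x i (scan x i)

def pc (x : List Bool) : ℕ := (scan F x x.length).2.1
def okp (x : List Bool) : Bool := (scan F x x.length).2.2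

theorem scan_fst (x : List Bool) : ∀ i, i ≤ x.length → (scan F x i).1 = x.take i := by
  intro i
  induction i with
  | zero => simp [scan]
  | succ i ih =>
    intro hi
    have hlt : i < x.length := hi
    rw [scan, stepF, ih (le_of_lt hlt), List.take_succ]
    simp [List.getD_eq_getElem x false hlt, List.getElem?_eq_getElem hlt]

theorem scan_agree (x : List Bool) (b : Bool) :
    ∀ i, i ≤ x.length → scan F (x ++ [b]) i = scan F x i := by
  intro i
  induction i with
  | zero => simp [scan]
  | succ i ih =>
    intro hi
    have hlt : i < x.length := hi
    rw [scan, scan, ih (le_of_lt hlt), stepF, stepF,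
      List.getD_append _ _ _ _ hlt]

theorem getD_concat (x : List Bool) (b : Bool) : (x ++ [b]).getD x.length false = b := by
  rw [List.getD_eq_getElem _ false (by simp), List.getElem_concat_length]
  rfl

theorem pc_append (x : List Bool) (b : Bool) :
    pc F (x ++ [b]) = pc F x + (if F x = some b then 1 else 0) := by
  have h1 : (x ++ [b]).length = x.length + 1 := by simp
  rw [pc, h1, scan, stepF, scan_agree F x b _ le_rfl, scan_fst F x _ le_rfl,
    List.take_length, getD_concat]
  rfl

theorem okp_append (x : List Bool) (b : Bool) :
    okp F (x ++ [b]) = (okp F x && !(decide (F x = some (!b)))) := by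
  have h1 : (x ++ [b]).length = x.length + 1 := by simp
  rw [okp, h1, scan, stepF, scan_agree F x b _ le_rfl, scan_fst F x _ le_rfl,
    List.take_length, getD_concat]
  rfl

theorem scan_comp (hF : Computable F) : Computable (fun x : List Bool => scan F x x.length) := by
  have hstep : Computable₂ (fun (x : List Bool) (p : ℕ × (List Bool × ℕ × Bool)) =>
      stepF F x p.1 p.2) := by
    have hx : Computable (fun p : List Bool × (ℕ × (List Bool × ℕ × Bool)) => p.1) :=
      Computable.fst
    have hi : Computable (fun p : List Bool × (ℕ × (List Bool × ℕ × Bool)) => p.2.1) :=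
      Computable.fst.comp Computable.snd
    have hs1 : Computable (fun p : List Bool × (ℕ × (List Bool × ℕ × Bool)) => p.2.2.1) :=
      Computable.fst.comp (Computable.snd.comp Computable.snd)
    have hs21 : Computable (fun p : List Bool × (ℕ × (List Bool × ℕ × Bool)) => p.2.2.2.1) :=
      Computable.fst.comp (Computable.snd.comp (Computable.snd.comp Computable.snd))
    have hs22 : Computable (fun p : List Bool × (ℕ × (List Bool × ℕ × Bool)) => p.2.2.2.2) :=
      Computable.snd.comp (Computable.snd.comp (Computable.snd.comp Computable.snd))
    have hgetD : Computable (fun p : List Bool × (ℕ × (List Bool × ℕ × Bool)) =>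
        p.1.getD p.2.1 false) :=
      ((Primrec.list_getD false).to_comp).comp hx hi
    have hFs1 : Computable (fun p : List Bool × (ℕ × (List Bool × ℕ × Bool)) => F p.2.2.1) :=
      hF.comp hs1
    have heq : Computable₂ (fun (a b : Option Bool) => decide (a = b)) :=
      Primrec.to_comp (Primrec.eq (α := Option Bool)).decide
    have hnot : Computable (fun b : Bool => !b) := (Primrec.dom_bool _).to_comp
    have hsome : Computable (fun b : Bool => (some b : Option Bool)) :=
      Computable.option_some
    have hc1 : Computable (fun p : List Bool × (ℕ × (List Bool × ℕ × Bool)) =>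
        decide (F p.2.2.1 = some (p.1.getD p.2.1 false))) :=
      heq.comp hFs1 (hsome.comp hgetD)
    have hc2 : Computable (fun p : List Bool × (ℕ × (List Bool × ℕ × Bool)) =>
        decide (F p.2.2.1 = some (!(p.1.getD p.2.1 false)))) :=
      heq.comp hFs1 (hsome.comp (hnot.comp hgetD))
    have hfst : Computable (fun p : List Bool × (ℕ × (List Bool × ℕ × Bool)) =>
        p.2.2.1 ++ [p.1.getD p.2.1 false]) :=
      (Primrec.list_concat.to_comp).comp hs1 hgetD
    have hmid : Computable (fun p : List Bool × (ℕ × (List Bool × ℕ × Bool)) =>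
        p.2.2.2.1 + (if F p.2.2.1 = some (p.1.getD p.2.1 false) then 1 else 0)) := by
      have : Computable (fun p : List Bool × (ℕ × (List Bool × ℕ × Bool)) =>
          (cond (decide (F p.2.2.1 = some (p.1.getD p.2.1 false))) 1 0 : ℕ)) :=
        Computable.cond hc1 (Computable.const 1) (Computable.const 0)
      refine (Primrec.nat_add.to_comp.comp hs21 this).of_eq fun p => ?_
      by_cases h : F p.2.2.1 = some (p.1.getD p.2.1 false) <;> simp [h]
    have hlast : Computable (fun p : List Bool × (ℕ × (List Bool × ℕ × Bool)) =>
        (p.2.2.2.2 && !(decide (F p.2.2.1 = some (!(p.1.getD p.2.1 false)))))) := by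
      have hband : Computable₂ (fun a b : Bool => a && b) := (Primrec.dom_bool₂ _).to_comp
      exact hband.comp hs22 (hnot.comp hc2)
    exact Computable₂.mk (hfst.pair (hmid.pair hlast))
  have := Computable.nat_rec (Primrec.list_length.to_comp)
    (Computable.const (([], 0, true) : List Bool × ℕ × Bool)) hstep
  refine this.of_eq fun x => ?_
  have hgen : ∀ n, (Nat.rec ([], 0, true) (fun y IH => stepF F x (y, IH).1 (y, IH).2) n :
      List Bool × ℕ × Bool) = scan F x n := by
    intro n
    induction n with
    | zero => rfl
    | succ n ih => simp only [scan]; rw [← ih]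
  exact hgen x.length

variable (F : List Bool → Option Bool)

def BQ (x : List Bool) : ℚ := if okp F x then 2 ^ pc F x else 0
noncomputable def BR (x : List Bool) : ℝ := ((BQ F x : ℚ) : ℝ)

theorem BQ_nonneg (x : List Bool) : 0 ≤ BQ F x := by
  unfold BQ; split <;> positivity

theorem BQ_fair (x : List Bool) :
    BQ F (x ++ [false]) + BQ F (x ++ [true]) = 2 * BQ F x := by
  unfold BQ
  rw [okp_append, okp_append, pc_append, pc_append]
  cases hok : okp F x
  · simp
  · cases hFx : F x with
    | none => simp [hFx]; ring
    | some b0 =>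
      cases b0 <;> simp [hFx, pow_succ] <;> ring

theorem BR_martingale : IsMartingale (BR F) := by
  constructor
  · intro x
    unfold BR
    exact_mod_cast BQ_nonneg F x
  · intro x
    unfold BR
    rw [← Rat.cast_ofNat, ← Rat.cast_mul, ← Rat.cast_add, Rat.cast_inj]
    exact BQ_fair F x

def ratCode (q : ℚ) : ℕ := Nat.pair (eZ q.num) q.den

theorem ratCode_comp : Computable ratCode :=
  (nth_comp.comp Computable.encode).of_eq fun q => key q

section X
variable (X : ℕ → Bool)

theorem pre_succ (n : ℕ) : pre X (n + 1) = pre X n ++ [X n] := by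
  simp [pre, List.range_succ]

theorem pre_length (n : ℕ) : (pre X n).length = n := by simp [pre]

variable (hpred : ∀ n b, F (pre X n) = some b → b = X n)

include hpred in
theorem okp_pre (n : ℕ) : okp F (pre X n) = true := by
  induction n with
  | zero => rfl
  | succ n ih =>
    rw [pre_succ, okp_append, ih, Bool.true_and]
    cases hFx : F (pre X n) with
    | none => simp
    | some b =>
      have := hpred n b hFx
      subst this
      simp

theorem pc_pre_mono : Monotone (fun n => pc F (pre X n)) := by
  apply monotone_nat_of_le_succ
  intro n
  rw [pre_succ, pc_append]
  omega

include hpred in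
theorem pc_pre_succ (n : ℕ) (hn : F (pre X n) ≠ none) :
    pc F (pre X (n + 1)) = pc F (pre X n) + 1 := by
  rw [pre_succ, pc_append]
  cases hFx : F (pre X n) with
  | none => exact absurd hFx hn
  | some b =>
    have := hpred n b hFx
    subst this
    simp

include hpred in
theorem pc_pre_unbounded (hinf : {n : ℕ | F (pre X n) ≠ none}.Infinite) :
    ∀ k : ℕ, ∃ n, k ≤ pc F (pre X n) := by
  intro k
  induction k with
  | zero => exact ⟨0, Nat.zero_le _⟩
  | succ k ih =>
    obtain ⟨n, hn⟩ := ih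
    obtain ⟨m, hm, hnm⟩ := hinf.exists_gt n
    refine ⟨m + 1, ?_⟩
    rw [pc_pre_succ F X hpred m hm]
    have h2 : pc F (pre X n) ≤ pc F (pre X m) := pc_pre_mono F X (le_of_lt hnm)
    omega

include hpred in
theorem BR_succeeds (hinf : {n : ℕ | F (pre X n) ≠ none}.Infinite) :
    Succeeds (BR F) X := by
  intro C
  obtain ⟨k, hk⟩ := exists_nat_gt C
  obtain ⟨n, hn⟩ := pc_pre_unbounded F X hpred hinf k
  refine ⟨n, ?_⟩
  have hok := okp_pre F X hpred n
  have hBR : BR F (pre X n) = ((2 : ℝ)) ^ pc F (pre X n) := by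
    unfold BR BQ
    rw [hok, if_pos rfl]
    push_cast
    ring
  rw [hBR]
  calc C < (k : ℝ) := hk
    _ ≤ 2 ^ k := by
        have : (k : ℕ) < 2 ^ k := Nat.lt_two_pow_self
        exact_mod_cast this.le
    _ ≤ 2 ^ pc F (pre X n) := by
        apply pow_le_pow_right₀ (by norm_num) hn

end X

theorem rat_lt_intCast (q : ℚ) (z : ℤ) : q < (z : ℚ) ↔ q.num < z * q.den := by
  rw [show q < (z:ℚ) ↔ (q.num : ℚ)/(q.den : ℚ) < (z:ℚ) by rw [Rat.num_div_den]]
  rw [div_lt_iff₀ (by exact_mod_cast q.pos)]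
  exact_mod_cast Iff.rfl

def gM (p : List Bool × ℚ) : Bool :=
  cond (okp F p.1)
    ((ratCode p.2).unpair.1.bodd
      || decide (nabs ((ratCode p.2).unpair.1) < 2 ^ pc F p.1 * (ratCode p.2).unpair.2))
    (ratCode p.2).unpair.1.bodd

theorem gM_comp (hF : Computable F) : Computable (gM F) := by
  have hscan := scan_comp F hF
  have hok : Computable (okp F) :=
    (Computable.snd.comp (Computable.snd.comp hscan)).of_eq fun x => rfl
  have hpc : Computable (pc F) :=
    (Computable.fst.comp (Computable.snd.comp hscan)).of_eq fun x => rfl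
  have hrc : Computable (fun p : List Bool × ℚ => ratCode p.2) :=
    ratCode_comp.comp Computable.snd
  have ha : Computable (fun p : List Bool × ℚ => (ratCode p.2).unpair.1) :=
    Computable.fst.comp (Computable.unpair.comp hrc)
  have hd : Computable (fun p : List Bool × ℚ => (ratCode p.2).unpair.2) :=
    Computable.snd.comp (Computable.unpair.comp hrc)
  have hbodd : Computable (fun p : List Bool × ℚ => (ratCode p.2).unpair.1.bodd) :=
    Computable.nat_bodd.comp ha
  have hpow : Computable₂ (fun a b : ℕ => a ^ b) :=
    (Primrec₂.unpaired'.mp Nat.Primrec.pow).to_comp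
  have hK : Computable (fun p : List Bool × ℚ => 2 ^ pc F p.1 * (ratCode p.2).unpair.2) :=
    Primrec.nat_mul.to_comp.comp (hpow.comp (Computable.const 2) (hpc.comp Computable.fst)) hd
  have hlt : Computable (fun p : List Bool × ℚ =>
      decide (nabs ((ratCode p.2).unpair.1) < 2 ^ pc F p.1 * (ratCode p.2).unpair.2)) :=
    Primrec.nat_lt.decide.to_comp.comp (nabs_primrec.to_comp.comp ha) hK
  have hor : Computable₂ (fun a b : Bool => a || b) := (Primrec.dom_bool₂ _).to_comp
  exact Computable.cond (hok.comp Computable.fst) (hor.comp hbodd hlt) hbodd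

theorem gM_spec (p : List Bool × ℚ) : gM F p = true ↔ ((p.2 : ℚ) : ℝ) < BR F p.1 := by
  obtain ⟨x, q⟩ := p
  have hrc : (ratCode q).unpair.1 = eZ q.num ∧ (ratCode q).unpair.2 = q.den := by
    rw [ratCode, Nat.unpair_pair]; exact ⟨rfl, rfl⟩
  unfold gM BR BQ
  simp only [hrc.1, hrc.2, bodd_eZ, nabs_eZ]
  cases hok : okp F x
  · rw [cond_false, if_neg (by simp), Rat.cast_zero, Rat.cast_lt_zero, decide_eq_true_eq]
    exact Rat.num_neg
  · rw [cond_true, if_pos rfl, Rat.cast_lt]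
    have h2 : ((2:ℚ))^(pc F x) = (((2^(pc F x) : ℤ)) : ℚ) := by push_cast; ring
    rw [h2, rat_lt_intCast]
    have hKZ : ((2^(pc F x) * q.den : ℕ) : ℤ) = (2^(pc F x) : ℤ) * q.den := by push_cast; ring
    have hd : 0 < q.den := q.pos
    simp only [Bool.or_eq_true, decide_eq_true_eq]
    rcases Int.natAbs_eq q.num with hnum | hnum <;> omega

end CRNTSP

theorem computablyRandom_not_totalStronglyPredictable (X : ℕ → Bool)
    (h : ComputablyRandom X) : ¬ TotalStronglyPredictable X := by
  rintro ⟨F, hF, hpred, hinf⟩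
  have hinf' : {n : ℕ | F (pre X n) ≠ none}.Infinite := hinf
  exact h (CRNTSP.BR F)
    ⟨CRNTSP.BR_martingale F, ⟨CRNTSP.gM F, CRNTSP.gM_comp F hF, fun p => CRNTSP.gM_spec F p⟩⟩
    (CRNTSP.BR_succeeds F X hpred hinf')
end

section
/- If an infinite binary sequence X is weakly Chaitin random, then X is not strongly predictable. -/
namespace WCRSP

def countLead : List Bool → ℕ
  | [] => 0
  | b :: l => bif b then countLead l + 1 else 0

def ofBits : List Bool → ℕ := fun w => w.foldr (fun b n => n + n + cond b 1 0) 0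

def parse (p : List Bool) : Option (ℕ × List Bool) :=
  if countLead p + 1 + countLead p ≤ p.length then
    some (ofBits ((p.drop (countLead p + 1)).take (countLead p)),
      (p.drop (countLead p + 1)).drop (countLead p))
  else none

abbrev St : Type := ℕ × List Bool × List Bool × ℕ

def stepHalt (s : St) : Option (List Bool ⊕ St) :=
  List.casesOn s.2.2.1 (some (Sum.inl s.2.1)) (fun _ _ => none)

def stepGo (q : St × Option Bool) : Option (List Bool ⊕ St) :=
  Option.casesOn q.2
    (List.casesOn q.1.2.2.1 none
      (fun h t => some (Sum.inr (q.1.1, q.1.2.1 ++ [h], t, q.1.2.2.2))))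
    (fun b => some (Sum.inr (q.1.1, q.1.2.1 ++ [b], q.1.2.2.1, q.1.2.2.2 + 1)))

def step (F : List Bool →. Option Bool) (s : St) : Part (List Bool ⊕ St) :=
  bif decide (s.1 ≤ s.2.2.2) then Part.ofOption (stepHalt s)
  else (F s.2.1).bind fun o => Part.ofOption (stepGo (s, o))

def M (F : List Bool →. Option Bool) (p : List Bool) : Part (List Bool) :=
  (Part.ofOption (parse p)).bind fun kv => PFun.fix (step F) (kv.1, ([], kv.2, 0))

def toBits : ℕ → List Bool
  | 0 => []
  | (n+1) => decide ((n+1) % 2 = 1) :: toBits ((n+1)/2)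
decreasing_by exact Nat.div_lt_self (Nat.succ_pos n) one_lt_two

lemma ofBits_toBits : ∀ n, ofBits (toBits n) = n := by
  intro n
  induction n using Nat.strong_induction_on with
  | _ n ih =>
    match n with
    | 0 => simp [toBits, ofBits]
    | (m+1) =>
      rw [toBits]
      have h2 : (m+1)/2 < m+1 := Nat.div_lt_self (Nat.succ_pos m) one_lt_two
      have := ih _ h2
      simp only [ofBits, List.foldr_cons] at *
      rw [this]
      rcases Nat.mod_two_eq_zero_or_one (m+1) with h | h <;>
        simp [h] <;> omega

lemma toBits_len : ∀ m n, n < 2^m → (toBits n).length ≤ m := by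
  intro m
  induction m with
  | zero => intro n hn; interval_cases n; simp [toBits]
  | succ m ih =>
    intro n hn
    match n with
    | 0 => simp [toBits]
    | (k+1) =>
      rw [toBits]
      simp only [List.length_cons]
      have : (k+1)/2 < 2^m := by
        rw [Nat.div_lt_iff_lt_mul two_pos]
        rw [pow_succ] at hn; omega
      exact Nat.succ_le_succ (ih _ (by omega))



lemma primrec_countLead : Primrec countLead := by
  have h : Primrec fun l : List Bool =>
      List.recOn (motive := fun _ => ℕ) l 0 (fun b l IH =>
        (fun (_ : List Bool) (t : Bool × List Bool × ℕ) => bif t.1 then t.2.2 + 1 else 0) l (b, l, IH)) := by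
    exact Primrec.list_rec Primrec.id (Primrec.const 0)
      ((Primrec.cond (Primrec.fst.comp Primrec.snd)
        (Primrec.succ.comp (Primrec.snd.comp (Primrec.snd.comp Primrec.snd)))
        (Primrec.const 0)).to₂)
  refine h.of_eq fun l => ?_
  induction l with
  | nil => rfl
  | cons b l ih => simp [countLead, ← ih]

lemma primrec_drop : Primrec₂ (fun (l : List Bool) (n : ℕ) => l.drop n) := by
  have h : Primrec fun a : List Bool × ℕ =>
      Nat.rec (motive := fun _ => List Bool) a.1
        (fun n IH => (fun (_ : List Bool × ℕ) (t : ℕ × List Bool) => t.2.tail) a (n, IH)) a.2 :=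
    Primrec.nat_rec' Primrec.snd Primrec.fst
      ((Primrec.list_tail.comp (Primrec.snd.comp Primrec.snd)).to₂)
  have h2 : Primrec fun a : List Bool × ℕ => a.1.drop a.2 := by
    refine h.of_eq fun a => ?_
    rcases a with ⟨l, n⟩
    induction n with
    | zero => rfl
    | succ n ih => simp only [Nat.rec] at ih ⊢; rw [ih, List.tail_drop]
  exact h2.to₂

lemma primrec_toList : Primrec (fun o : Option Bool => o.toList) := by
  have h : Primrec fun o : Option Bool =>
      Option.casesOn (motive := fun _ => List Bool) o []
        (fun b => (fun (_ : Option Bool) (b : Bool) => [b]) o b) :=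
    Primrec.option_casesOn Primrec.id (Primrec.const [])
      ((Primrec.list_cons.comp Primrec.snd (Primrec.const [])).to₂)
  refine h.of_eq fun o => ?_
  cases o <;> rfl

lemma primrec_take : Primrec₂ (fun (l : List Bool) (n : ℕ) => l.take n) := by
  have h : Primrec fun a : List Bool × ℕ =>
      Nat.rec (motive := fun _ => List Bool) []
        (fun n IH =>
          (fun (a : List Bool × ℕ) (t : ℕ × List Bool) => t.2 ++ (a.1[t.1]?).toList) a (n, IH)) a.2 :=
    Primrec.nat_rec' Primrec.snd (Primrec.const [])
      ((Primrec.list_append.comp (Primrec.snd.comp Primrec.snd)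
        (primrec_toList.comp (Primrec.list_getElem?.comp (Primrec.fst.comp Primrec.fst)
          (Primrec.fst.comp Primrec.snd)))).to₂)
  have h2 : Primrec fun a : List Bool × ℕ => a.1.take a.2 := by
    refine h.of_eq fun a => ?_
    rcases a with ⟨l, n⟩
    induction n with
    | zero => rfl
    | succ n ih =>
        simp only [Nat.rec] at ih ⊢
        rw [ih, List.take_succ]
  exact h2.to₂

lemma primrec_ofBits : Primrec ofBits := by
  have h : Primrec fun l : List Bool =>
      l.foldr (fun b s => (fun (_ : List Bool) (t : Bool × ℕ) => t.2 + t.2 + cond t.1 1 0) l (b, s)) 0 :=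
    Primrec.list_foldr Primrec.id (Primrec.const 0)
      ((Primrec.nat_add.comp
        (Primrec.nat_add.comp (Primrec.snd.comp Primrec.snd) (Primrec.snd.comp Primrec.snd))
        (Primrec.cond (Primrec.fst.comp Primrec.snd) (Primrec.const 1) (Primrec.const 0))).to₂)
  exact h.of_eq fun l => rfl

lemma primrec_parse : Primrec parse := by
  have hcl : Primrec countLead := primrec_countLead
  have hrest : Primrec fun p : List Bool => p.drop (countLead p + 1) :=
    primrec_drop.comp Primrec.id (Primrec.succ.comp hcl)
  exact Primrec.ite
    (Primrec.nat_le.comp (Primrec.nat_add.comp (Primrec.succ.comp hcl) hcl) Primrec.list_length)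
    (Primrec.option_some.comp
      (Primrec.pair (primrec_ofBits.comp (primrec_take.comp hrest hcl))
        (primrec_drop.comp hrest hcl)))
    (Primrec.const none)

lemma primrec_stepHalt : Primrec stepHalt := by
  have h : Primrec fun s : St =>
      List.casesOn (motive := fun _ => Option (List Bool ⊕ St)) s.2.2.1 (some (Sum.inl s.2.1))
        (fun b l => (fun (_ : St) (_ : Bool × List Bool) => (none : Option (List Bool ⊕ St))) s (b, l)) :=
    Primrec.list_casesOn (Primrec.fst.comp (Primrec.snd.comp Primrec.snd))
      (Primrec.option_some.comp (Primrec.sumInl.comp (Primrec.fst.comp Primrec.snd)))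
      ((Primrec.const none).to₂)
  refine h.of_eq fun s => ?_
  rcases s with ⟨k, x, v, pc⟩; cases v <;> rfl

lemma primrec_stepGo : Primrec stepGo := by
  have hnone : Primrec fun q : St × Option Bool =>
      List.casesOn (motive := fun _ => Option (List Bool ⊕ St)) q.1.2.2.1 none
        (fun h t => (fun (q : St × Option Bool) (c : Bool × List Bool) =>
          some (Sum.inr (q.1.1, q.1.2.1 ++ [c.1], c.2, q.1.2.2.2))) q (h, t)) :=
    Primrec.list_casesOn
      (Primrec.fst.comp (Primrec.snd.comp (Primrec.snd.comp Primrec.fst)))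
      (Primrec.const none)
      ((Primrec.option_some.comp (Primrec.sumInr.comp
        (Primrec.pair (Primrec.fst.comp (Primrec.fst.comp Primrec.fst))
          (Primrec.pair
            (Primrec.list_append.comp
              (Primrec.fst.comp (Primrec.snd.comp (Primrec.fst.comp Primrec.fst)))
              (Primrec.list_cons.comp (Primrec.fst.comp Primrec.snd) (Primrec.const [])))
            (Primrec.pair (Primrec.snd.comp Primrec.snd)
              (Primrec.snd.comp (Primrec.snd.comp (Primrec.snd.comp (Primrec.fst.comp Primrec.fst))))))))).to₂)
  have h : Primrec fun q : St × Option Bool =>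
      Option.casesOn (motive := fun _ => Option (List Bool ⊕ St)) q.2
        ((fun q : St × Option Bool =>
          List.casesOn (motive := fun _ => Option (List Bool ⊕ St)) q.1.2.2.1 none
            (fun h t => some (Sum.inr (q.1.1, q.1.2.1 ++ [h], t, q.1.2.2.2)))) q)
        (fun b => (fun (q : St × Option Bool) (b : Bool) =>
          some (Sum.inr (q.1.1, q.1.2.1 ++ [b], q.1.2.2.1, q.1.2.2.2 + 1))) q b) :=
    Primrec.option_casesOn Primrec.snd hnone
      ((Primrec.option_some.comp (Primrec.sumInr.comp
        (Primrec.pair (Primrec.fst.comp (Primrec.fst.comp Primrec.fst))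
          (Primrec.pair
            (Primrec.list_append.comp
              (Primrec.fst.comp (Primrec.snd.comp (Primrec.fst.comp Primrec.fst)))
              (Primrec.list_cons.comp Primrec.snd (Primrec.const [])))
            (Primrec.pair
              (Primrec.fst.comp (Primrec.snd.comp (Primrec.snd.comp (Primrec.fst.comp Primrec.fst))))
              (Primrec.succ.comp
                (Primrec.snd.comp (Primrec.snd.comp (Primrec.snd.comp (Primrec.fst.comp Primrec.fst)))))))))).to₂)
  refine h.of_eq fun q => ?_
  rcases q with ⟨⟨k, x, v, pc⟩, o⟩; cases o <;> cases v <;> rfl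

lemma partrec_step {F : List Bool →. Option Bool} (hF : Partrec F) : Partrec (step F) := by
  have h2 : Partrec₂ (fun (s : St) (o : Option Bool) => Part.ofOption (stepGo (s, o))) := by
    have := Computable.ofOption primrec_stepGo.to_comp
    exact this.to₂
  refine Partrec.cond
    ((PrimrecPred.decide (Primrec.nat_le.comp Primrec.fst
      (Primrec.snd.comp (Primrec.snd.comp Primrec.snd)))).to_comp)
    (Computable.ofOption primrec_stepHalt.to_comp) ?_
  exact Partrec.bind
    (hF.comp ((Primrec.fst.comp Primrec.snd).to_comp)) h2

lemma partrec_M {F : List Bool →. Option Bool} (hF : Partrec F) : Partrec (M F) := by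
  have h3 : Partrec (fun q : List Bool × (ℕ × List Bool) =>
      PFun.fix (step F) (q.2.1, ([], q.2.2, 0))) :=
    (Partrec.fix (partrec_step hF)).comp
      ((Primrec.pair (Primrec.fst.comp Primrec.snd)
        (Primrec.pair (Primrec.const [])
          (Primrec.pair (Primrec.snd.comp Primrec.snd) (Primrec.const 0)))).to_comp)
  exact Partrec.bind (Computable.ofOption primrec_parse.to_comp) h3.to₂


lemma dom_of_fixDom {f : St →. List Bool ⊕ St} {s : St} (h : (PFun.fix f s).Dom) :
    (f s).Dom := by
  obtain ⟨b, hb⟩ := Part.dom_iff_mem.1 h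
  rcases PFun.mem_fix_iff.1 hb with h1 | ⟨a', h1, _⟩ <;>
    exact Part.dom_iff_mem.2 ⟨_, h1⟩

lemma pf_core {F : List Bool →. Option Bool} :
    ∀ (s : St) (b : List Bool), b ∈ PFun.fix (step F) s →
      ∀ t : List Bool, (PFun.fix (step F) (s.1, s.2.1, s.2.2.1 ++ t, s.2.2.2)).Dom → t = [] := by
  intro s b hb
  refine PFun.fixInduction (C := fun s' => ∀ t : List Bool,
    (PFun.fix (step F) (s'.1, s'.2.1, s'.2.2.1 ++ t, s'.2.2.2)).Dom → t = []) hb ?_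
  rintro ⟨k, x, v, pc⟩ hb' ih t hdom'
  simp only at hdom' ih ⊢
  by_cases hkpc : k ≤ pc
  · -- halting branch : v must be []
    have hstep : step F (k, x, v, pc) = Part.ofOption (stepHalt (k, x, v, pc)) := by
      simp [step, hkpc]
    have hv : v = [] := by
      have hd : (step F (k, x, v, pc)).Dom := dom_of_fixDom (Part.dom_iff_mem.2 ⟨_, hb'⟩)
      rw [hstep] at hd
      cases v with
      | nil => rfl
      | cons h t' => simp [stepHalt] at hd
    subst hv
    have hd2 : (step F (k, x, t, pc)).Dom := dom_of_fixDom hdom'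
    have hstep2 : step F (k, x, t, pc) = Part.ofOption (stepHalt (k, x, t, pc)) := by
      simp [step, hkpc]
    rw [hstep2] at hd2
    cases t with
    | nil => rfl
    | cons h t' => simp [stepHalt] at hd2
  · -- running branch
    have hFd : (F x).Dom := by
      have hd : (step F (k, x, v, pc)).Dom := dom_of_fixDom (Part.dom_iff_mem.2 ⟨_, hb'⟩)
      simp only [step, decide_eq_false hkpc, Bool.cond_false] at hd
      obtain ⟨y, hy⟩ := Part.dom_iff_mem.1 hd
      obtain ⟨a, ha, _⟩ := Part.mem_bind_iff.1 hy
      exact Part.dom_iff_mem.2 ⟨a, ha⟩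
    set o : Option Bool := (F x).get hFd with ho
    have hFx : F x = Part.some o := (Part.some_get hFd).symm
    have hstep : ∀ v' : List Bool,
        step F (k, x, v', pc) = Part.ofOption (stepGo ((k, x, v', pc), o)) := by
      intro v'
      simp [step, decide_eq_false hkpc, hFx, Part.bind_some]
    cases ho' : o with
    | some bb =>
      have h1 : Sum.inr (k, x ++ [bb], v, pc + 1) ∈ step F (k, x, v, pc) := by
        rw [hstep]; simp [stepGo, ho']
      have h2 : Sum.inr (k, x ++ [bb], v ++ t, pc + 1) ∈ step F (k, x, v ++ t, pc) := by
        rw [hstep]; simp [stepGo, ho']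
      refine ih _ h1 t ?_
      obtain ⟨b', hb2⟩ := Part.dom_iff_mem.1 hdom'
      exact Part.dom_iff_mem.2 ⟨b', PFun.fix_fwd hb2 h2⟩
    | none =>
      cases v with
      | nil =>
        have hd : (step F (k, x, [], pc)).Dom := dom_of_fixDom (Part.dom_iff_mem.2 ⟨_, hb'⟩)
        rw [hstep] at hd
        simp [stepGo, ho'] at hd
      | cons h v₁ =>
        have h1 : Sum.inr (k, x ++ [h], v₁, pc) ∈ step F (k, x, h :: v₁, pc) := by
          rw [hstep]; simp [stepGo, ho']
        have h2 : Sum.inr (k, x ++ [h], v₁ ++ t, pc) ∈ step F (k, x, (h :: v₁) ++ t, pc) := by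
          rw [hstep]; simp [stepGo, ho']
        refine ih _ h1 t ?_
        obtain ⟨b', hb2⟩ := Part.dom_iff_mem.1 hdom'
        exact Part.dom_iff_mem.2 ⟨b', PFun.fix_fwd hb2 h2⟩


lemma countLead_hdr (j : ℕ) (r : List Bool) :
    countLead (List.replicate j true ++ false :: r) = j := by
  induction j with
  | zero => simp [countLead]
  | succ j ih => simp [List.replicate_succ, countLead, ih]

lemma countLead_shape : ∀ p : List Bool, countLead p < p.length →
    p = List.replicate (countLead p) true ++ false :: p.drop (countLead p + 1) := by
  intro p
  induction p with
  | nil => simp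
  | cons b l ih =>
    cases b with
    | false => simp [countLead]
    | true =>
      intro h
      simp only [countLead, cond_true] at h ⊢
      have := ih (by simpa using Nat.lt_of_succ_lt_succ h)
      simp [List.replicate_succ]
      exact this

lemma countLead_append (a t : List Bool) (h : countLead a < a.length) :
    countLead (a ++ t) = countLead a := by
  induction a with
  | nil => simp at h
  | cons b l ih =>
    cases b with
    | false => simp [countLead]
    | true =>
      simp only [countLead, cond_true] at h ⊢
      rw [List.cons_append, countLead, cond_true, ih (by simpa using Nat.lt_of_succ_lt_succ h)]

lemma parse_hdr (j : ℕ) (w v : List Bool) (hw : w.length = j) :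
    parse (List.replicate j true ++ false :: (w ++ v)) = some (ofBits w, v) := by
  have hshape : List.replicate j true ++ false :: (w ++ v)
      = (List.replicate j true ++ [false]) ++ (w ++ v) := by simp
  have hcl : countLead (List.replicate j true ++ false :: (w ++ v)) = j :=
    countLead_hdr j (w ++ v)
  have hlen1 : (List.replicate j true ++ [false]).length = j + 1 := by simp
  have hdrop : (List.replicate j true ++ false :: (w ++ v)).drop (j + 1) = w ++ v := by
    rw [hshape]; exact List.drop_left' hlen1
  have hlen : (List.replicate j true ++ false :: (w ++ v)).length = j + 1 + (j + v.length) := by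
    simp [hw]; omega
  rw [parse, hcl, hdrop, hlen]
  rw [if_pos (by omega)]
  rw [List.take_left' hw, List.drop_left' hw]

lemma parse_shape {p : List Bool} {k : ℕ} {v : List Bool} (h : parse p = some (k, v)) :
    ∃ w : List Bool, p = List.replicate (countLead p) true ++ false :: (w ++ v)
      ∧ w.length = countLead p ∧ k = ofBits w ∧ countLead p < p.length := by
  rw [parse] at h
  by_cases hc : countLead p + 1 + countLead p ≤ p.length
  · rw [if_pos hc] at h
    rw [Option.some.injEq, Prod.mk.injEq] at h
    obtain ⟨hk0, hv0⟩ := h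
    have hcl : countLead p < p.length := by omega
    refine ⟨(p.drop (countLead p + 1)).take (countLead p), ?_, ?_, hk0.symm, hcl⟩
    · conv_lhs => rw [countLead_shape p hcl]
      congr 1
      congr 1
      rw [← hv0, List.take_append_drop]
    · rw [List.length_take, List.length_drop]
      omega
  · rw [if_neg hc] at h; exact absurd h (by simp)

lemma M_dom {F : List Bool →. Option Bool} {p : List Bool} (h : (M F p).Dom) :
    ∃ k v, parse p = some (k, v) ∧ (PFun.fix (step F) (k, ([], v, 0))).Dom := by
  obtain ⟨b, hb⟩ := Part.dom_iff_mem.1 h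
  obtain ⟨kv, hkv, hfix⟩ := Part.mem_bind_iff.1 hb
  rw [Part.mem_ofOption] at hkv
  exact ⟨kv.1, kv.2, by simpa using hkv, Part.dom_iff_mem.2 ⟨b, hfix⟩⟩

lemma M_prefixFree {F : List Bool →. Option Bool} (p q : List Bool)
    (hp : (M F p).Dom) (hq : (M F q).Dom) (hpq : p <+: q) : p = q := by
  obtain ⟨k, v, hparse, hfix⟩ := M_dom hp
  obtain ⟨k', v', hparse', hfix'⟩ := M_dom hq
  obtain ⟨w, hshape, hwlen, hk, hcl⟩ := parse_shape hparse
  obtain ⟨w', hshape', hwlen', hk', hcl'⟩ := parse_shape hparse'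
  obtain ⟨t, rfl⟩ := hpq
  have hclq : countLead (p ++ t) = countLead p := countLead_append p t hcl
  rw [hclq] at hshape' hwlen'
  have heq : List.replicate (countLead p) true ++ false :: (w ++ (v ++ t))
      = List.replicate (countLead p) true ++ false :: (w' ++ v') := by
    calc List.replicate (countLead p) true ++ false :: (w ++ (v ++ t))
        = (List.replicate (countLead p) true ++ false :: (w ++ v)) ++ t := by simp
      _ = p ++ t := by rw [← hshape]
      _ = _ := hshape'
  have heq2 : w ++ (v ++ t) = w' ++ v' := by
    have := List.append_cancel_left heq
    injection this
  obtain ⟨hww, hvv⟩ := List.append_inj heq2 (by omega)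
  have ht : t = [] := by
    have hkk : k' = k := by rw [hk', ← hww, ← hk]
    have hfix2 : (PFun.fix (step F) (k, ([], v ++ t, 0))).Dom := by
      rw [← hkk, hvv]; exact hfix'
    obtain ⟨b, hb⟩ := Part.dom_iff_mem.1 hfix
    exact pf_core (k, ([], v, 0)) b hb t hfix2
  simp [ht]


def pcount (o : ℕ → Option Bool) (n : ℕ) : ℕ :=
  ((List.range n).filter (fun i => (o i).isSome)).length

def leftover (X : ℕ → Bool) (o : ℕ → Option Bool) (i nk : ℕ) : List Bool :=
  ((List.range' i (nk - i)).filter (fun j => !(o j).isSome)).map X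

lemma pre_zero (X : ℕ → Bool) : pre X 0 = [] := by simp [pre]

lemma pre_succ (X : ℕ → Bool) (n : ℕ) : pre X (n + 1) = pre X n ++ [X n] := by
  simp [pre, List.range_succ]

lemma pcount_zero (o : ℕ → Option Bool) : pcount o 0 = 0 := by simp [pcount]

lemma pcount_succ (o : ℕ → Option Bool) (n : ℕ) :
    pcount o (n + 1) = pcount o n + (bif (o n).isSome then 1 else 0) := by
  rw [pcount, pcount, List.range_succ, List.filter_append]
  cases h : (o n).isSome <;> simp [h]

lemma pcount_mono (o : ℕ → Option Bool) : Monotone (pcount o) := by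
  apply monotone_nat_of_le_succ
  intro n
  rw [pcount_succ]
  cases (o n).isSome <;> simp

lemma pcount_le (o : ℕ → Option Bool) (n : ℕ) : pcount o n ≤ n := by
  calc pcount o n ≤ (List.range n).length := List.length_filter_le _ _
    _ = n := List.length_range

lemma length_filter_not (q : ℕ → Bool) : ∀ l : List ℕ,
    (l.filter (fun x => !q x)).length = l.length - (l.filter q).length := by
  intro l
  induction l with
  | nil => simp
  | cons a l ih =>
    cases h : q a <;> simp [List.filter_cons, h, ih] <;>
      have := List.length_filter_le q l <;> omega

lemma leftover_length (X : ℕ → Bool) (o : ℕ → Option Bool) (nk : ℕ) :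
    (leftover X o 0 nk).length = nk - pcount o nk := by
  rw [leftover, List.length_map, Nat.sub_zero, ← List.range_eq_range',
    length_filter_not, List.length_range, pcount]

lemma run_mem {F : List Bool →. Option Bool} {X : ℕ → Bool} {o : ℕ → Option Bool}
    (hFo : ∀ i, F (pre X i) = Part.some (o i))
    (hcorr2 : ∀ i b, o i = some b → b = X i)
    {k nk : ℕ} (hk : k ≤ pcount o nk) (hmin : ∀ i, i < nk → pcount o i < k) :
    ∀ m i, i + m = nk →
      pre X nk ∈ PFun.fix (step F) (k, (pre X i, leftover X o i nk, pcount o i)) := by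
  intro m
  induction m with
  | zero =>
    intro i hi
    rw [show i = nk by omega]
    apply PFun.fix_stop
    have hlv : leftover X o nk nk = [] := by simp [leftover]
    have hdec : decide (k ≤ pcount o nk) = true := decide_eq_true hk
    simp only [step, hlv, hdec, Bool.cond_true]
    rw [Part.mem_ofOption]
    simp [stepHalt]
  | succ m ih =>
    intro i hi
    have hilt : i < nk := by omega
    have hpci : ¬ (k ≤ pcount o i) := not_le.2 (hmin i hilt)
    have hstep : step F (k, (pre X i, leftover X o i nk, pcount o i))
        = Part.ofOption (stepGo ((k, (pre X i, leftover X o i nk, pcount o i)), o i)) := by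
      simp [step, decide_eq_false hpci, hFo i, Part.bind_some]
    have hrange : nk - i = (nk - (i + 1)) + 1 := by omega
    cases ho : o i with
    | some b =>
      have hb : b = X i := hcorr2 i b ho
      have hlv : leftover X o i nk = leftover X o (i + 1) nk := by
        rw [leftover, leftover, hrange, List.range'_succ]
        simp [List.filter_cons, ho]
      have hpc : pcount o (i + 1) = pcount o i + 1 := by
        rw [pcount_succ, ho]; rfl
      refine PFun.mem_fix_iff.2 (Or.inr ⟨(k, (pre X (i+1), leftover X o (i+1) nk, pcount o (i+1))), ?_, ih (i+1) (by omega)⟩)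
      rw [hstep, Part.mem_ofOption]
      simp only [stepGo, ho]
      rw [hlv, hpc, pre_succ, hb]
      rfl
    | none =>
      have hlv : leftover X o i nk = X i :: leftover X o (i + 1) nk := by
        rw [leftover, leftover, hrange, List.range'_succ]
        simp [List.filter_cons, ho]
      have hpc : pcount o (i + 1) = pcount o i := by
        rw [pcount_succ, ho]; rfl
      refine PFun.mem_fix_iff.2 (Or.inr ⟨(k, (pre X (i+1), leftover X o (i+1) nk, pcount o (i+1))), ?_, ih (i+1) (by omega)⟩)
      rw [hstep, Part.mem_ofOption, hlv]
      simp only [stepGo, ho]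
      rw [hpc, pre_succ]
      rfl


end WCRSP

theorem weaklyChaitinRandom_not_stronglyPredictable
    (U : List Bool →. List Bool) (hU : IsOptimalMachine U) (X : ℕ → Bool)
    (h : WeaklyChaitinRandom U X) : ¬ StronglyPredictable X := by
  rintro ⟨F, hFpr, hdomF, hcorr, hinf⟩
  obtain ⟨c, hc⟩ := h
  set o : ℕ → Option Bool := fun i => (F (pre X i)).get (hdomF i) with ho_def
  have hFo : ∀ i, F (pre X i) = Part.some (o i) := fun i => (Part.some_get (hdomF i)).symm
  have hcorr2 : ∀ i b, o i = some b → b = X i := fun i b hb =>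
    hcorr i b (by rw [hFo i]; exact Part.mem_some_iff.2 hb.symm)
  have hSinf : {i : ℕ | (o i).isSome = true}.Infinite := by
    have hset : {n : ℕ | ∃ b, some b ∈ F (pre X n)} = {i : ℕ | (o i).isSome = true} := by
      ext i
      simp only [Set.mem_setOf_eq]
      constructor
      · rintro ⟨b, hb⟩
        rw [hFo i, Part.mem_some_iff] at hb
        rw [← hb]; rfl
      · intro hi
        obtain ⟨b, hb⟩ := Option.isSome_iff_exists.1 hi
        exact ⟨b, by rw [hFo i]; exact Part.mem_some_iff.2 hb.symm⟩
    rw [← hset]; exact hinf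
  have hunb : ∀ k, ∃ n, k ≤ WCRSP.pcount o n := by
    intro k
    induction k with
    | zero => exact ⟨0, Nat.zero_le _⟩
    | succ k ihk =>
      obtain ⟨n, hn⟩ := ihk
      obtain ⟨m, hm, hnm⟩ := hSinf.exists_gt n
      refine ⟨m + 1, ?_⟩
      have h1 := WCRSP.pcount_mono o (le_of_lt hnm)
      have h2 : WCRSP.pcount o (m + 1) = WCRSP.pcount o m + 1 := by
        rw [WCRSP.pcount_succ, Set.mem_setOf_eq.mp hm]; rfl
      omega
  have hMach : IsPrefixFreeMachine (WCRSP.M F) :=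
    ⟨WCRSP.partrec_M hFpr, WCRSP.M_prefixFree⟩
  obtain ⟨d, hd⟩ := hU.2 (WCRSP.M F) hMach
  have hkey : ∀ k, 1 ≤ k → k ≤ c + d + 2 * (WCRSP.toBits k).length + 1 := by
    intro k hk1
    have hex := hunb k
    set nk := Nat.find hex with hnk_def
    have hk : k ≤ WCRSP.pcount o nk := Nat.find_spec hex
    have hmin : ∀ i, i < nk → WCRSP.pcount o i < k := fun i hi =>
      not_le.1 (Nat.find_min hex hi)
    have hnk1 : 1 ≤ nk := by
      rcases Nat.eq_zero_or_pos nk with h0 | h1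
      · rw [h0, WCRSP.pcount_zero] at hk; omega
      · exact h1
    set w := WCRSP.toBits k with hw
    set v := WCRSP.leftover X o 0 nk with hv
    set p : List Bool := List.replicate w.length true ++ false :: (w ++ v) with hp
    have hparse : WCRSP.parse p = some (k, v) := by
      rw [hp, WCRSP.parse_hdr w.length w v rfl, hw, WCRSP.ofBits_toBits]
    have hmemM : pre X nk ∈ WCRSP.M F p := by
      rw [WCRSP.M]
      refine Part.mem_bind_iff.2 ⟨(k, v), ?_, ?_⟩
      · rw [Part.mem_ofOption, hparse]; rfl
      · have hr := WCRSP.run_mem hFo hcorr2 hk hmin nk 0 (by omega)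
        rw [WCRSP.pre_zero, WCRSP.pcount_zero] at hr
        exact hr
    have hdomM : (WCRSP.M F p).Dom := Part.dom_iff_mem.2 ⟨_, hmemM⟩
    obtain ⟨q, hqlen, hqU⟩ := hd p hdomM
    have hmemU : pre X nk ∈ U q := by rw [hqU]; exact hmemM
    have hKC : KC U (pre X nk) ≤ q.length := Nat.sInf_le ⟨q, rfl, hmemU⟩
    have hplen : p.length = w.length + 1 + (w.length + v.length) := by
      simp [hp]; omega
    have hvlen : v.length = nk - WCRSP.pcount o nk := WCRSP.leftover_length X o nk
    have hpcle := WCRSP.pcount_le o nk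
    have hWCR := hc nk hnk1
    have hnkq : nk ≤ c + q.length := by
      have hfin : (nk : ℤ) - c ≤ (q.length : ℤ) :=
        le_trans hWCR (by exact_mod_cast hKC)
      omega
    omega
  set a := c + d with ha
  have hk1 : 1 ≤ 2 ^ (a + 6) - 1 := by
    have : 2 ≤ 2 ^ (a + 6) := by
      calc 2 = 2 ^ 1 := rfl
        _ ≤ 2 ^ (a + 6) := Nat.pow_le_pow_right (by norm_num) (by omega)
    omega
  have hlt : 2 ^ (a + 6) - 1 < 2 ^ (a + 6) := by omega
  have hlen : (WCRSP.toBits (2 ^ (a + 6) - 1)).length ≤ a + 6 :=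
    WCRSP.toBits_len (a + 6) _ hlt
  have hfin := hkey (2 ^ (a + 6) - 1) hk1
  have h1 : a < 2 ^ a := Nat.lt_two_pow_self
  have h2 : 2 ^ (a + 6) = 2 ^ a * 64 := by rw [pow_add]; norm_num
  set B := 2 ^ a with hB
  set C := 2 ^ (a + 6) with hC
  omega
end

section
/- Let 0 < T < 1 be a real. If an infinite binary sequence X is strictly Chaitin T-random, then there exists L ≥ 2 such that X does not contain a run of L consecutive zeros. -/
namespace RunProofAux

def tw (l : List Bool) : List Bool := l.foldr (fun a acc => cond a [] (a :: acc)) []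

def gz (x : List Bool) : List Bool := x ++ tw x.reverse

lemma tw_replicate_append (m : ℕ) (r : List Bool)
    (hr : r = [] ∨ ∃ r', r = true :: r') :
    tw (List.replicate m false ++ r) = List.replicate m false := by
  induction m with
  | zero => rcases hr with rfl | ⟨r', rfl⟩ <;> simp [tw]
  | succ m ih =>
      simpa only [List.replicate_succ, List.cons_append, tw, List.foldr_cons, cond_false]
        using congrArg (false :: ·) ih

lemma primrec_gz : Primrec gz := by
  have h₂ : Primrec (fun q : List Bool × (Bool × List Bool) => cond q.2.1 [] (q.2.1 :: q.2.2)) :=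
    Primrec.cond (Primrec.fst.comp Primrec.snd) (Primrec.const [])
      (Primrec.list_cons.comp (Primrec.fst.comp Primrec.snd) (Primrec.snd.comp Primrec.snd))
  have htw : Primrec tw := Primrec.list_foldr Primrec.id (Primrec.const []) h₂.to₂
  exact Primrec.list_append.comp Primrec.id (htw.comp Primrec.list_reverse)

lemma kc_le {U : List Bool →. List Bool} {x p : List Bool} (hxp : x ∈ U p) :
    KC U x ≤ p.length := Nat.sInf_le ⟨p, rfl, hxp⟩

lemma exists_prog {U : List Bool →. List Bool} (hU : IsOptimalMachine U) (x : List Bool) :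
    ∃ p, x ∈ U p := by
  classical
  set M : List Bool →. List Bool :=
    fun p => ((if p = [] then some x else none : Option (List Bool)) : Part (List Bool)) with hM
  have hdom : ∀ p, (M p).Dom → p = [] := by
    intro p hp
    by_contra hne
    simp [hM, hne] at hp
  have hpf : IsPrefixFreeMachine M := by
    refine ⟨Computable.ofOption ?_, fun p q hp hq _ => (hdom p hp).trans (hdom q hq).symm⟩
    exact (Primrec.ite (Primrec.eq.comp Primrec.id (Primrec.const ([] : List Bool)))
      (Primrec.const (some x)) (Primrec.const none)).to_comp
  obtain ⟨d, hd⟩ := hU.2 M hpf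
  have hMnil : M [] = Part.some x := by simp [hM]
  obtain ⟨q, -, hq⟩ := hd [] (by rw [hMnil]; trivial)
  exact ⟨q, Part.eq_some_iff.mp (hq.trans hMnil)⟩

lemma kc_prog {U : List Bool →. List Bool} (hU : IsOptimalMachine U) (x : List Bool) :
    ∃ p : List Bool, p.length = KC U x ∧ x ∈ U p := by
  obtain ⟨p, hp⟩ := exists_prog hU x
  exact Nat.sInf_mem (⟨p.length, p, rfl, hp⟩ :
    {n : ℕ | ∃ p : List Bool, p.length = n ∧ x ∈ U p}.Nonempty)

lemma kc_step {U : List Bool →. List Bool} (hU : IsOptimalMachine U) :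
    ∃ d : ℕ, ∀ x : List Bool, KC U (gz x) ≤ KC U x + d := by
  set M : List Bool →. List Bool := fun p => (U p).map gz with hM
  have hMdom : ∀ p, (M p).Dom ↔ (U p).Dom := fun p => Iff.rfl
  have hpf : IsPrefixFreeMachine M := by
    refine ⟨Partrec.map hU.1.1 ((primrec_gz.to_comp.comp Computable.snd).to₂), ?_⟩
    intro p q hp hq hpq
    exact hU.1.2 p q ((hMdom p).mp hp) ((hMdom q).mp hq) hpq
  obtain ⟨d, hd⟩ := hU.2 M hpf
  refine ⟨d, fun x => ?_⟩
  obtain ⟨p, hlen, hp⟩ := kc_prog hU x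
  have hUp : U p = Part.some x := Part.eq_some_iff.mpr hp
  have hMp : M p = Part.some (gz x) := by rw [hM]; simp [hUp]
  obtain ⟨q, hql, hq⟩ := hd p (by rw [hMp]; trivial)
  have : gz x ∈ U q := Part.eq_some_iff.mp (hq.trans hMp)
  calc KC U (gz x) ≤ q.length := kc_le this
    _ ≤ p.length + d := hql
    _ = KC U x + d := by rw [hlen]

lemma pre_add (X : ℕ → Bool) (a b : ℕ) :
    pre X (a + b) = pre X a ++ (List.range b).map (fun i => X (a + i)) := by
  simp [pre, List.range_add, Function.comp]

lemma pre_run (X : ℕ → Bool) (a b : ℕ) (h : ∀ i < b, X (a + i) = false) :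
    pre X (a + b) = pre X a ++ List.replicate b false := by
  rw [pre_add]
  congr 1
  apply List.eq_replicate_iff.mpr
  constructor
  · simp
  · intro c hc
    simp only [List.mem_map, List.mem_range] at hc
    obtain ⟨i, hi, rfl⟩ := hc
    exact h i hi

lemma gz_pre (X : ℕ → Bool) (s m : ℕ)
    (hrun : ∀ i < 2 * m, X (s + i) = false)
    (hhead : s = 0 ∨ X (s - 1) = true) :
    gz (pre X (s + m)) = pre X (s + 2 * m) := by
  have hrun1 : ∀ i < m, X (s + i) = false := fun i hi => hrun i (by omega)
  have h1 : pre X (s + m) = pre X s ++ List.replicate m false := pre_run X s m hrun1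
  have hr : (pre X s).reverse = [] ∨ ∃ r', (pre X s).reverse = true :: r' := by
    cases s with
    | zero => left; simp [pre]
    | succ t =>
      right
      have ht : X t = true := by
        rcases hhead with h0 | h1
        · exact absurd h0 (Nat.succ_ne_zero t)
        · simpa using h1
      refine ⟨(pre X t).reverse, ?_⟩
      have hp : pre X (t + 1) = pre X t ++ [X t] := by simp [pre, List.range_succ]
      rw [hp, List.reverse_append]
      simp [ht]
  have htw : tw ((pre X (s + m)).reverse) = List.replicate m false := by
    rw [h1, List.reverse_append, List.reverse_replicate]
    exact tw_replicate_append m _ hr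
  have h2 : pre X (s + 2 * m) = pre X (s + m) ++ List.replicate m false := by
    have : ∀ i < m, X (s + m + i) = false := fun i hi => by
      have := hrun (m + i) (by omega)
      rwa [← Nat.add_assoc] at this
    have := pre_run X (s + m) m this
    rwa [show s + m + m = s + 2 * m by omega] at this
  rw [gz, htw, ← h2]

end RunProofAux

theorem strictlyChaitinTRandom_bounded_runs_of_zeros
    (U : List Bool →. List Bool) (hU : IsOptimalMachine U)
    (T : ℝ) (hT0 : 0 < T) (hT1 : T < 1) (X : ℕ → Bool)
    (h : StrictlyChaitinTRandom U T X) :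
    ∃ L : ℕ, 2 ≤ L ∧ ∀ n₀ : ℕ, ∃ i < L, X (n₀ + i) = true := by
  classical
  by_contra hcon
  push_neg at hcon
  obtain ⟨c, hc⟩ := h.1
  obtain ⟨d₀, hd₀⟩ := h.2
  obtain ⟨dM, hdM⟩ := RunProofAux.kc_step hU
  obtain ⟨j, hj⟩ := pow_unbounded_of_one_lt (((dM : ℝ) + 1) / T) (one_lt_two)
  obtain ⟨m, hm⟩ := exists_nat_gt ((c : ℝ) + d₀ + T + dM * j)
  set k := j + m with hk
  -- the crucial numeric inequality
  have hkey : (c : ℝ) + d₀ + T + dM * k < T * 2 ^ k := by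
    have h2j : (dM : ℝ) + 1 < T * 2 ^ j := by
      rw [div_lt_iff₀ hT0] at hj; linarith
    have h2m : (m : ℝ) + 1 ≤ 2 ^ m := by exact_mod_cast (Nat.lt_two_pow_self (n := m))
    have hpos : (0 : ℝ) < 2 ^ m := by positivity
    have hdm0 : (0 : ℝ) ≤ (dM : ℝ) := Nat.cast_nonneg dM
    have hx : T * 2 ^ k = (T * 2 ^ j) * 2 ^ m := by rw [hk, pow_add]; ring
    have hkc : (k : ℝ) = (j : ℝ) + m := by rw [hk]; push_cast; ring
    have f1 : ((dM : ℝ) + 1) * 2 ^ m < (T * 2 ^ j) * 2 ^ m :=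
      mul_lt_mul_of_pos_right h2j hpos
    have f2 : ((dM : ℝ) + 1) * ((m : ℝ) + 1) ≤ ((dM : ℝ) + 1) * 2 ^ m :=
      mul_le_mul_of_nonneg_left h2m (by linarith)
    rw [hx, hkc]
    nlinarith [f1, f2, hm, hdm0]
  -- get a long run of zeros
  obtain ⟨n₀, hn₀⟩ := hcon (2 ^ k + 2) (Nat.le_add_left 2 (2 ^ k))
  have hrun : ∀ i, n₀ ≤ i → i < n₀ + (2 ^ k + 2) → X i = false := by
    intro i h1 h2
    have h3 := hn₀ (i - n₀) (by omega)
    rw [show n₀ + (i - n₀) = i by omega] at h3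
    exact Bool.not_eq_true (X i) ▸ h3
  -- start of the maximal run covering [n₀, n₀ + 2^k + 2)
  have hex : ∃ t, ∀ i, t ≤ i → i < n₀ + (2 ^ k + 2) → X i = false := ⟨n₀, hrun⟩
  set s := Nat.find hex with hs
  have hQs : ∀ i, s ≤ i → i < n₀ + (2 ^ k + 2) → X i = false := Nat.find_spec hex
  have hsn₀ : s ≤ n₀ := Nat.find_min' hex hrun
  have hhead : s = 0 ∨ X (s - 1) = true := by
    rcases Nat.eq_zero_or_pos s with h0 | hpos
    · exact Or.inl h0
    · right
      have hnQ := Nat.find_min hex (show s - 1 < s by omega)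
      push_neg at hnQ
      obtain ⟨i, h1, h2, h3⟩ := hnQ
      have hit : i = s - 1 := by
        by_contra hne
        exact h3 (hQs i (by omega) h2)
      subst hit
      cases hb : X (s - 1) with
      | false => exact absurd hb h3
      | true => rfl
  -- the iteration
  have key : ∀ j', j' ≤ k → (KC U (pre X (s + 2 ^ j')) : ℝ) ≤
      (KC U (pre X (s + 1)) : ℝ) + j' * dM := by
    intro j'
    induction j' with
    | zero => intro _; simp
    | succ i ih =>
      intro hik
      have hi : i ≤ k := by omega
      have h2le : 2 * 2 ^ i ≤ 2 ^ k := by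
        have : 2 * 2 ^ i = 2 ^ (i + 1) := by rw [pow_succ]; ring
        rw [this]
        exact Nat.pow_le_pow_right (by norm_num) (by omega)
      have hstep : RunProofAux.gz (pre X (s + 2 ^ i)) = pre X (s + 2 * 2 ^ i) := by
        apply RunProofAux.gz_pre X s (2 ^ i) ?_ hhead
        intro i' hi'
        exact hQs (s + i') (by omega) (by omega)
      have hbd := hdM (pre X (s + 2 ^ i))
      rw [hstep] at hbd
      have h2eq : s + 2 * 2 ^ i = s + 2 ^ (i + 1) := by
        rw [pow_succ]; ring
      rw [h2eq] at hbd
      have hbd' : (KC U (pre X (s + 2 ^ (i + 1))) : ℝ) ≤ (KC U (pre X (s + 2 ^ i)) : ℝ) + dM := by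
        exact_mod_cast hbd
      have := ih hi
      push_cast
      push_cast at this
      linarith
  have hone : 1 ≤ 2 ^ k := Nat.one_le_two_pow
  have hlow := hc (s + 2 ^ k) (by omega)
  have hup := hd₀ (s + 1) (by omega)
  have hchain := key k le_rfl
  have e1 : ((s + 2 ^ k : ℕ) : ℝ) = (s : ℝ) + 2 ^ k := by push_cast; ring
  have e2 : ((s + 1 : ℕ) : ℝ) = (s : ℝ) + 1 := by push_cast; ring
  rw [e1] at hlow
  rw [e2] at hup
  have e3 : T * ((s : ℝ) + 2 ^ k) = T * s + T * 2 ^ k := by ring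
  have e4 : T * ((s : ℝ) + 1) = T * s + T := by ring
  rw [e3] at hlow
  rw [e4] at hup
  linarith
end

section
/- Let 0 < T < 1 be a real. If an infinite binary sequence X is strictly Chaitin T-random, then X is finite-state strongly predictable. -/
namespace SCTR


def dup : List Bool → List Bool
  | [] => []
  | b :: L => b :: b :: dup L

@[simp] theorem dup_nil : dup [] = [] := rfl
@[simp] theorem dup_cons (b L) : dup (b :: L) = b :: b :: dup L := rfl

theorem dup_length (L : List Bool) : (dup L).length = 2 * L.length := by
  induction L with
  | nil => rfl
  | cons b L ih => simp [ih]; omega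

def bin : ℕ → List Bool
  | 0 => []
  | (n+1) => decide ((n+1) % 2 = 1) :: bin ((n+1)/2)
  decreasing_by exact Nat.div_lt_self (Nat.succ_pos n) one_lt_two

theorem bin_zero : bin 0 = [] := by simp [bin]

theorem bin_pos (n : ℕ) (h : n ≠ 0) : bin n = decide (n % 2 = 1) :: bin (n / 2) := by
  cases n with
  | zero => exact absurd rfl h
  | succ m => rw [bin]

def lval (L : List Bool) : ℕ := L.foldr (fun b n => (cond b 1 0) + 2 * n) 0

@[simp] theorem lval_nil : lval [] = 0 := rfl
@[simp] theorem lval_cons (b L) : lval (b :: L) = (cond b 1 0) + 2 * lval L := rfl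

theorem lval_bin (n : ℕ) : lval (bin n) = n := by
  induction n using Nat.strong_induction_on with
  | _ n ih =>
    cases n with
    | zero => rw [bin_zero]; rfl
    | succ m =>
      rw [bin_pos (m+1) (Nat.succ_ne_zero m), lval_cons,
        ih ((m+1)/2) (Nat.div_lt_self (Nat.succ_pos m) one_lt_two)]
      rcases Nat.even_or_odd (m+1) with h | h
      · have h2 : (m+1) % 2 = 0 := Nat.even_iff.mp h
        simp [h2]
        omega
      · have h2 : (m+1) % 2 = 1 := Nat.odd_iff.mp h
        simp [h2]
        omega

theorem bin_two_pow (k : ℕ) : (bin (2 ^ k)).length = k + 1 := by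
  induction k with
  | zero => rw [pow_zero, bin_pos 1 one_ne_zero]; simp [bin_zero]
  | succ j ih =>
    have h1 : (2:ℕ) ^ (j+1) ≠ 0 := Nat.pos_iff_ne_zero.mp (Nat.pow_pos two_pos)
    rw [bin_pos _ h1]
    have h2 : (2:ℕ) ^ (j+1) / 2 = 2 ^ j := by
      rw [pow_succ]; exact Nat.mul_div_cancel _ two_pos
    simp [h2, ih]



def pstep (s : ℕ × List Bool × List Bool) (b : Bool) : ℕ × List Bool × List Bool :=
  if s.1 = 0 then (if b = true then 2 else 1, s.2.1, s.2.2)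
  else if s.1 = 1 then
    (if b = true then 3 else 0, if b = true then s.2.1 else s.2.1 ++ [false], s.2.2)
  else if s.1 = 2 then
    (if b = true then 0 else 4, if b = true then s.2.1 ++ [true] else s.2.1, s.2.2)
  else if s.1 = 3 then (3, s.2.1, s.2.2 ++ [b])
  else (4, s.2.1, s.2.2)

def psplit (l : List Bool) : Option (List Bool × List Bool) :=
  let s := l.foldl pstep (0, [], [])
  if s.1 = 3 then some (s.2.1, s.2.2) else none

theorem foldl_done (r' : List Bool) : ∀ (acc r : List Bool),
    r'.foldl pstep (3, acc, r) = (3, acc, r ++ r') := by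
  induction r' with
  | nil => intro acc r; simp
  | cons b r' ih =>
    intro acc r
    show r'.foldl pstep (pstep (3, acc, r) b) = _
    simp only [pstep]
    norm_num
    rw [ih]
    simp

theorem foldl_fail (r' : List Bool) : ∀ (acc r : List Bool),
    r'.foldl pstep (4, acc, r) = (4, acc, r) := by
  induction r' with
  | nil => intro acc r; simp
  | cons b r' ih =>
    intro acc r
    show r'.foldl pstep (pstep (4, acc, r) b) = _
    simp only [pstep]
    norm_num
    exact ih acc r

theorem foldl_code (L : List Bool) : ∀ (acc rest : List Bool),
    (dup L ++ [false, true] ++ rest).foldl pstep (0, acc, []) = (3, acc ++ L, rest) := by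
  induction L with
  | nil =>
    intro acc rest
    show rest.foldl pstep (pstep (pstep (0, acc, []) false) true) = _
    simp only [pstep]
    norm_num
    rw [foldl_done]
    simp
  | cons a L ih =>
    intro acc rest
    show ((dup L ++ [false, true] ++ rest).foldl pstep (pstep (pstep (0, acc, []) a) a)) = _
    have : pstep (pstep (0, acc, []) a) a = (0, acc ++ [a], []) := by
      cases a <;> simp [pstep]
    rw [this, ih]
    simp

theorem psplit_code (L rest : List Bool) :
    psplit (dup L ++ [false, true] ++ rest) = some (L, rest) := by
  unfold psplit
  rw [foldl_code L [] rest]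
  simp

theorem foldl_sound : ∀ (N : ℕ) (l : List Bool), l.length ≤ N → ∀ (acc : List Bool) {L r : List Bool},
    l.foldl pstep (0, acc, []) = (3, L, r) →
    ∃ L', L = acc ++ L' ∧ l = dup L' ++ [false, true] ++ r := by
  intro N
  induction N with
  | zero =>
    intro l hl acc L r h
    have : l = [] := List.length_eq_zero_iff.mp (Nat.le_zero.mp hl)
    subst this
    simp at h
  | succ N ih =>
    intro l hl acc L r h
    match l with
    | [] => simp at h
    | [b] =>
      exfalso
      have : pstep (0, acc, []) b = (3, L, r) := h
      cases b <;> simp [pstep] at this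
    | b :: b' :: rest =>
      have h2 : rest.foldl pstep (pstep (pstep (0, acc, []) b) b') = (3, L, r) := h
      cases b
      · cases b'
        · -- pair (false,false) : data bit false
          have e : pstep (pstep (0, acc, []) false) false = (0, acc ++ [false], []) := by
            simp [pstep]
          rw [e] at h2
          obtain ⟨L', hL, hrest⟩ := ih rest (by simp at hl; omega) (acc ++ [false]) h2
          exact ⟨false :: L', by simp [hL], by simp [hrest]⟩
        · -- (false,true) : terminator
          have e : pstep (pstep (0, acc, []) false) true = (3, acc, []) := by
            simp [pstep]
          rw [e, foldl_done] at h2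
          simp at h2
          exact ⟨[], by simp [h2.1], by simp [h2.2.symm]⟩
      · cases b'
        · -- (true,false): fail
          exfalso
          have e : pstep (pstep (0, acc, []) true) false = (4, acc, []) := by
            simp [pstep]
          rw [e, foldl_fail] at h2
          simp at h2
        · have e : pstep (pstep (0, acc, []) true) true = (0, acc ++ [true], []) := by
            simp [pstep]
          rw [e] at h2
          obtain ⟨L', hL, hrest⟩ := ih rest (by simp at hl; omega) (acc ++ [true]) h2
          exact ⟨true :: L', by simp [hL], by simp [hrest]⟩

theorem psplit_sound {l L r : List Bool} (h : psplit l = some (L, r)) :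
    l = dup L ++ [false, true] ++ r := by
  simp only [psplit] at h
  split at h
  · next h3 =>
    simp only [Option.some.injEq, Prod.mk.injEq] at h
    have hfold : l.foldl pstep (0, [], []) = (3, L, r) :=
      Prod.ext_iff.mpr ⟨h3, Prod.ext_iff.mpr ⟨h.1, h.2⟩⟩
    obtain ⟨L', hL, hl⟩ := foldl_sound l.length l le_rfl [] hfold
    simpa [hL] using hl
  · simp at h

theorem dup_prefix_det : ∀ (L₁ : List Bool) (L₂ : List Bool) {r₁ r₂ : List Bool},
    (dup L₁ ++ [false, true] ++ r₁) <+: (dup L₂ ++ [false, true] ++ r₂) →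
    L₁ = L₂ ∧ r₁ <+: r₂ := by
  intro L₁
  induction L₁ with
  | nil =>
    intro L₂ r₁ r₂ h
    cases L₂ with
    | nil =>
      simp at h ⊢
      simpa [List.prefix_append_right_inj] using h
    | cons b L₂ =>
      exfalso
      simp only [dup_nil, dup_cons, List.nil_append, List.cons_append] at h
      rw [List.cons_prefix_cons] at h
      obtain ⟨hb, h⟩ := h
      rw [List.cons_prefix_cons] at h
      obtain ⟨hb', _⟩ := h
      simp [← hb] at hb'
  | cons a L₁ ih =>
    intro L₂ r₁ r₂ h
    cases L₂ with
    | nil =>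
      exfalso
      simp only [dup_nil, dup_cons, List.nil_append, List.cons_append] at h
      rw [List.cons_prefix_cons] at h
      obtain ⟨hb, h⟩ := h
      rw [List.cons_prefix_cons] at h
      obtain ⟨hb', _⟩ := h
      simp [hb] at hb'
    | cons b L₂ =>
      simp only [dup_cons, List.cons_append] at h
      rw [List.cons_prefix_cons] at h
      obtain ⟨hb, h⟩ := h
      rw [List.cons_prefix_cons] at h
      obtain ⟨_, h⟩ := h
      subst hb
      obtain ⟨hL, hr⟩ := ih L₂ h
      exact ⟨by rw [hL], hr⟩




open Primrec in
theorem pstep_prim : Primrec₂ pstep := by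
  have hs1 : Primrec fun a : (ℕ × List Bool × List Bool) × Bool => a.1.1 := fst.comp fst
  have hacc : Primrec fun a : (ℕ × List Bool × List Bool) × Bool => a.1.2.1 :=
    fst.comp (snd.comp fst)
  have hr : Primrec fun a : (ℕ × List Bool × List Bool) × Bool => a.1.2.2 :=
    snd.comp (snd.comp fst)
  have hb : Primrec fun a : (ℕ × List Bool × List Bool) × Bool => a.2 := snd
  have hbt : PrimrecPred fun a : (ℕ × List Bool × List Bool) × Bool => a.2 = true :=
    PrimrecRel.comp Primrec.eq hb (const true)
  have happf : Primrec fun a : (ℕ × List Bool × List Bool) × Bool => a.1.2.1 ++ [false] :=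
    list_concat.comp hacc (const false)
  have happt : Primrec fun a : (ℕ × List Bool × List Bool) × Bool => a.1.2.1 ++ [true] :=
    list_concat.comp hacc (const true)
  have happb : Primrec fun a : (ℕ × List Bool × List Bool) × Bool => a.1.2.2 ++ [a.2] :=
    list_concat.comp hr hb
  have h0 : Primrec fun a : (ℕ × List Bool × List Bool) × Bool =>
      ((if a.2 = true then (2:ℕ) else 1), a.1.2.1, a.1.2.2) :=
    (ite hbt (const 2) (const 1)).pair (hacc.pair hr)
  have h1 : Primrec fun a : (ℕ × List Bool × List Bool) × Bool =>
      ((if a.2 = true then (3:ℕ) else 0),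
        (if a.2 = true then a.1.2.1 else a.1.2.1 ++ [false]), a.1.2.2) :=
    (ite hbt (const 3) (const 0)).pair ((ite hbt hacc happf).pair hr)
  have h2 : Primrec fun a : (ℕ × List Bool × List Bool) × Bool =>
      ((if a.2 = true then (0:ℕ) else 4),
        (if a.2 = true then a.1.2.1 ++ [true] else a.1.2.1), a.1.2.2) :=
    (ite hbt (const 0) (const 4)).pair ((ite hbt happt hacc).pair hr)
  have h3 : Primrec fun a : (ℕ × List Bool × List Bool) × Bool =>
      ((3:ℕ), a.1.2.1, a.1.2.2 ++ [a.2]) :=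
    (const 3).pair (hacc.pair happb)
  have h4 : Primrec fun a : (ℕ × List Bool × List Bool) × Bool =>
      ((4:ℕ), a.1.2.1, a.1.2.2) :=
    (const 4).pair (hacc.pair hr)
  have heq : ∀ n : ℕ, PrimrecPred fun a : (ℕ × List Bool × List Bool) × Bool => a.1.1 = n :=
    fun n => PrimrecRel.comp Primrec.eq hs1 (const n)
  have : Primrec fun a : (ℕ × List Bool × List Bool) × Bool => pstep a.1 a.2 := by
    simp only [pstep]
    exact ite (heq 0) h0 (ite (heq 1) h1 (ite (heq 2) h2 (ite (heq 3) h3 h4)))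
  exact this

open Primrec in
theorem psplit_prim : Primrec psplit := by
  have hfold : Primrec fun l : List Bool => l.foldl pstep (0, [], []) := by
    have := list_foldl (α := List Bool) (β := Bool) (σ := ℕ × List Bool × List Bool)
      Primrec.id (const (0, [], [])) (pstep_prim.comp (fst.comp snd) (snd.comp snd)).to₂
    exact this
  have hc : PrimrecPred fun l : List Bool => (l.foldl pstep (0, [], [])).1 = 3 :=
    PrimrecRel.comp Primrec.eq (fst.comp hfold) (const 3)
  have hsome : Primrec fun l : List Bool =>
      (some ((l.foldl pstep (0, [], [])).2.1, (l.foldl pstep (0, [], [])).2.2) :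
        Option (List Bool × List Bool)) :=
    option_some.comp ((fst.comp (snd.comp hfold)).pair (snd.comp (snd.comp hfold)))
  exact (ite hc hsome (const none)).of_eq fun l => by simp [psplit]


def codeN (m : ℕ) : List Bool := dup (bin m) ++ [false, true]

theorem codeN_length (m : ℕ) : (codeN m).length = 2 * (bin m).length + 2 := by
  simp [codeN, dup_length]

def appM (U : List Bool →. List Bool) (l : List Bool) : Part (List Bool) :=
  (Part.ofOption (psplit l)).bind fun s =>
    (U s.2).map fun y => y ++ List.replicate (lval s.1) false

theorem replicate_prim : Primrec fun n : ℕ => List.replicate n false := by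
  have := Primrec.list_map Primrec.list_range ((Primrec.const false).comp Primrec.fst).to₂
  refine this.of_eq fun n => ?_
  induction n with
  | zero => rfl
  | succ k ih => rw [List.range_succ]; simp_all [List.replicate_succ']

theorem lval_prim : Primrec lval := by
  have := Primrec.list_foldr (Primrec.id (α := List Bool)) (Primrec.const 0)
    ((Primrec.nat_add.comp
      (Primrec.cond (Primrec.fst.comp Primrec.snd) (Primrec.const 1) (Primrec.const 0))
      (Primrec.nat_mul.comp (Primrec.const 2) (Primrec.snd.comp Primrec.snd))).to₂)
  exact this.of_eq fun l => rfl

theorem appM_partrec {U : List Bool →. List Bool} (hU : Partrec U) : Partrec (appM U) := by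
  have hsplit : Partrec fun l : List Bool => (Part.ofOption (psplit l)) :=
    Computable.ofOption psplit_prim.to_comp
  have hg : Computable₂ fun (p : List Bool × (List Bool × List Bool)) (y : List Bool) =>
      y ++ List.replicate (lval p.2.1) false := by
    have hrep : Primrec fun q : (List Bool × (List Bool × List Bool)) × List Bool =>
        List.replicate (lval q.1.2.1) false :=
      replicate_prim.comp (lval_prim.comp (Primrec.fst.comp (Primrec.snd.comp Primrec.fst)))
    exact (Primrec.list_append.comp Primrec.snd hrep).to_comp
  have hinner : Partrec₂ fun (l : List Bool) (s : List Bool × List Bool) =>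
      (U s.2).map fun y => y ++ List.replicate (lval s.1) false := by
    have h1 : Partrec fun p : List Bool × (List Bool × List Bool) => U p.2.2 :=
      hU.comp (Computable.snd.comp Computable.snd)
    exact h1.map hg
  exact hsplit.bind hinner

theorem appM_dom {U : List Bool →. List Bool} {l : List Bool} :
    (appM U l).Dom ↔ ∃ L p, psplit l = some (L, p) ∧ (U p).Dom := by
  unfold appM
  cases hc : psplit l with
  | none => simp [hc, Part.ofOption]
  | some s =>
    rcases s with ⟨L, p⟩
    simp [hc, Part.ofOption]

theorem appM_code (U : List Bool →. List Bool) (m : ℕ) (p : List Bool) :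
    appM U (codeN m ++ p) = (U p).map fun y => y ++ List.replicate m false := by
  unfold appM
  have : codeN m ++ p = dup (bin m) ++ [false, true] ++ p := by simp [codeN]
  rw [this, psplit_code]
  simp [Part.ofOption, lval_bin]

theorem appM_machine {U : List Bool →. List Bool} (hU : IsPrefixFreeMachine U) :
    IsPrefixFreeMachine (appM U) := by
  constructor
  · exact appM_partrec hU.1
  · intro p q hp hq hpre
    obtain ⟨L₁, p₁, hs₁, hd₁⟩ := appM_dom.mp hp
    obtain ⟨L₂, p₂, hs₂, hd₂⟩ := appM_dom.mp hq
    have e₁ := psplit_sound hs₁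
    have e₂ := psplit_sound hs₂
    rw [e₁, e₂] at hpre
    obtain ⟨hL, hr⟩ := dup_prefix_det L₁ L₂ hpre
    have : p₁ = p₂ := hU.2 p₁ p₂ hd₁ hd₂ hr
    rw [e₁, e₂, hL, this]

def constM (x : List Bool) (l : List Bool) : Part (List Bool) :=
  Part.ofOption (if l = [] then some x else none)

theorem constM_machine (x : List Bool) : IsPrefixFreeMachine (constM x) := by
  constructor
  · exact Computable.ofOption
      ((Primrec.ite (PrimrecRel.comp Primrec.eq Primrec.id (Primrec.const []))
        (Primrec.const (some x)) (Primrec.const none)).to_comp)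
  · intro p q hp hq _
    have hp' : p = [] := by
      by_contra hne
      simp [constM, hne, Part.ofOption] at hp
    have hq' : q = [] := by
      by_contra hne
      simp [constM, hne, Part.ofOption] at hq
    rw [hp', hq']

theorem kc_set_nonempty {U : List Bool →. List Bool} (hU : IsOptimalMachine U)
    (x : List Bool) : {n : ℕ | ∃ p : List Bool, p.length = n ∧ x ∈ U p}.Nonempty := by
  obtain ⟨d, hd⟩ := hU.2 (constM x) (constM_machine x)
  have hdom : (constM x []).Dom := by simp [constM, Part.ofOption]
  obtain ⟨q, _, hq⟩ := hd [] hdom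
  refine ⟨q.length, q, rfl, ?_⟩
  rw [hq]
  simp [constM, Part.ofOption]

theorem kc_witness {U : List Bool →. List Bool} (hU : IsOptimalMachine U)
    (x : List Bool) : ∃ p : List Bool, p.length = KC U x ∧ x ∈ U p :=
  Nat.sInf_mem (kc_set_nonempty hU x)

theorem kc_le {U : List Bool →. List Bool} {x p : List Bool} (h : x ∈ U p) :
    KC U x ≤ p.length :=
  Nat.sInf_le ⟨p, rfl, h⟩

theorem kc_append {U : List Bool →. List Bool} (hU : IsOptimalMachine U) :
    ∃ dM : ℕ, ∀ (x : List Bool) (m : ℕ),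
      KC U (x ++ List.replicate m false) ≤ KC U x + 2 * (bin m).length + 2 + dM := by
  obtain ⟨dM, hdM⟩ := hU.2 (appM U) (appM_machine hU.1)
  refine ⟨dM, fun x m => ?_⟩
  obtain ⟨p, hp, hxp⟩ := kc_witness hU x
  have hUp : (U p).Dom := Part.dom_iff_mem.mpr ⟨x, hxp⟩
  have hdom : (appM U (codeN m ++ p)).Dom := by
    rw [appM_code]
    exact hUp
  obtain ⟨q, hqlen, hq⟩ := hdM _ hdom
  have hmem : (x ++ List.replicate m false) ∈ U q := by
    rw [hq, appM_code]
    exact Part.mem_map _ hxp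
  calc KC U (x ++ List.replicate m false) ≤ q.length := kc_le hmem
    _ ≤ (codeN m ++ p).length + dM := hqlen
    _ = KC U x + 2 * (bin m).length + 2 + dM := by
        simp [codeN_length, hp]
        omega

theorem run_bound {U : List Bool →. List Bool} (hU : IsOptimalMachine U)
    {T : ℝ} (hT0 : 0 < T) {X : ℕ → Bool} (h : StrictlyChaitinTRandom U T X) :
    ∃ K : ℕ, ∀ n m : ℕ, 1 ≤ n → (∀ i < m, X (n + i) = false) → m ≤ K := by
  obtain ⟨⟨c, hc⟩, ⟨d, hd⟩⟩ := h
  obtain ⟨dM, hdM⟩ := kc_append hU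
  set C : ℝ := (c : ℝ) + d + dM with hC
  have hC0 : (0:ℝ) ≤ C := by positivity
  have key : ∀ n m : ℕ, 1 ≤ n → (∀ i < m, X (n + i) = false) →
      T * m ≤ C + 2 * ((bin m).length : ℝ) + 2 := by
    intro n m hn hrun
    have hsplit : pre X (n + m) = pre X n ++ List.replicate m false := by
      unfold pre
      rw [List.range_add, List.map_append]
      congr 1
      have hrep : ∀ mm, (∀ i < mm, X (n + i) = false) →
          (List.range mm).map (fun i => X (n + i)) = List.replicate mm false := by
        intro mm
        induction mm with
        | zero => intro _; rfl
        | succ p ih =>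
          intro hp
          rw [List.range_succ, List.map_append, ih (fun i hi => hp i (by omega)),
            List.replicate_succ']
          simp [hp p (by omega)]
      rw [List.map_map, show (X ∘ fun y => n + y) = fun i => X (n + i) from rfl]
      exact hrep m hrun
    have h1 : T * (↑(n + m)) - c ≤ (KC U (pre X (n + m)) : ℝ) := hc (n + m) (by omega)
    have h2 : (KC U (pre X (n + m)) : ℝ) ≤
        (KC U (pre X n) : ℝ) + 2 * ((bin m).length : ℝ) + 2 + dM := by
      rw [hsplit]
      exact_mod_cast hdM (pre X n) m
    have h3 : (KC U (pre X n) : ℝ) ≤ T * n + d := hd n hn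
    push_cast at h1
    linarith
  set j : ℕ := max 1 ⌈(C + 9) / T⌉₊ with hj
  have hj1 : 1 ≤ j := le_max_left _ _
  have hj1' : (1:ℝ) ≤ (j:ℝ) := by exact_mod_cast hj1
  have hTj : C + 9 ≤ T * j := by
    have h1 : (C + 9) / T ≤ (⌈(C + 9) / T⌉₊ : ℝ) := Nat.le_ceil _
    have h2 : ((⌈(C + 9) / T⌉₊ : ℕ) : ℝ) ≤ (j : ℝ) := by
      exact_mod_cast le_max_right 1 ⌈(C + 9) / T⌉₊
    have h3 : (C + 9) / T ≤ (j : ℝ) := le_trans h1 h2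
    calc C + 9 = ((C + 9) / T) * T := by field_simp
      _ ≤ (j : ℝ) * T := mul_le_mul_of_nonneg_right h3 hT0.le
      _ = T * j := mul_comm _ _
  refine ⟨2 ^ (2 * j), fun n m hn hrun => ?_⟩
  by_contra hgt
  push_neg at hgt
  have hrun' : ∀ i < 2 ^ (2 * j), X (n + i) = false := fun i hi => hrun i (lt_trans hi hgt)
  have hkey := key n (2 ^ (2 * j)) hn hrun'
  rw [bin_two_pow] at hkey
  have hpownat : j * j ≤ 2 ^ (2 * j) := by
    have hjp : j ≤ 2 ^ j := (Nat.lt_two_pow_self (n := j)).le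
    calc j * j ≤ 2 ^ j * 2 ^ j := Nat.mul_le_mul hjp hjp
      _ = 2 ^ (2 * j) := by rw [← pow_add]; ring_nf
  have hpow : (j : ℝ) * (j : ℝ) ≤ ((2 ^ (2 * j) : ℕ) : ℝ) := by exact_mod_cast hpownat
  push_cast at hkey hpow
  nlinarith [mul_le_mul_of_nonneg_left hpow hT0.le,
    mul_le_mul_of_nonneg_right hTj (by linarith : (0:ℝ) ≤ (j:ℝ)),
    le_mul_of_one_le_right hC0 hj1']

def trun (X : ℕ → Bool) : ℕ → ℕ
  | 0 => 0
  | n + 1 => cond (X n) 0 (trun X n + 1)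

@[simp] theorem trun_zero (X : ℕ → Bool) : trun X 0 = 0 := rfl

theorem trun_succ (X : ℕ → Bool) (n : ℕ) : trun X (n + 1) = cond (X n) 0 (trun X n + 1) := rfl

theorem trun_spec (X : ℕ → Bool) :
    ∀ n, (∀ i < trun X n, X (n - 1 - i) = false) ∧ trun X n ≤ n := by
  intro n
  induction n with
  | zero => exact ⟨fun i hi => absurd hi (by simp), le_refl 0⟩
  | succ n ih =>
    rw [trun_succ]
    cases hX : X n with
    | true => exact ⟨fun i hi => absurd hi (by simp), by simp⟩
    | false =>
      simp only [cond_false]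
      constructor
      · intro i hi
        cases i with
        | zero => simpa using hX
        | succ i' =>
          have h1 := ih.1 i' (by omega)
          have h2 : n + 1 - 1 - (i' + 1) = n - 1 - i' := by omega
          rwa [h2]
      · omega

theorem trun_le {X : ℕ → Bool} {K : ℕ}
    (hK : ∀ n m : ℕ, 1 ≤ n → (∀ i < m, X (n + i) = false) → m ≤ K) :
    ∀ n, trun X n ≤ K + 1 := by
  intro n
  by_contra hgt
  push_neg at hgt
  set t := trun X n with ht
  have hspec := trun_spec X n
  have htn : t ≤ n := hspec.2
  have hrun : ∀ i < t - 1, X ((n - t + 1) + i) = false := by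
    intro i hi
    have h1 := hspec.1 (t - 2 - i) (by omega)
    have h2 : n - 1 - (t - 2 - i) = (n - t + 1) + i := by omega
    rwa [h2] at h1
  have := hK (n - t + 1) (t - 1) (by omega) hrun
  omega

theorem trun_chain {X : ℕ → Bool} {n ℓ : ℕ} (hX : ∀ i < ℓ, X (n + i) = false) :
    ∀ i, i ≤ ℓ → trun X (n + i) = trun X n + i := by
  intro i
  induction i with
  | zero => simp
  | succ i' ih =>
    intro hle
    have h1 : n + (i' + 1) = (n + i') + 1 := by omega
    rw [h1, trun_succ, hX i' (by omega), cond_false, ih (by omega)]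
    omega

theorem pre_succ (X : ℕ → Bool) (n : ℕ) : pre X (n + 1) = pre X n ++ [X n] := by
  unfold pre
  rw [List.range_succ]
  simp

def dfaD (N Kc : ℕ) : (Fin (N + 1) × Fin (Kc + 1)) → Bool → (Fin (N + 1) × Fin (Kc + 1)) :=
  fun s b => (⟨min (s.1.val + 1) N, by omega⟩,
    cond b ⟨0, by omega⟩ ⟨min (s.2.val + 1) Kc, by omega⟩)

def dfaQ0 (N Kc : ℕ) : Fin (N + 1) × Fin (Kc + 1) := (⟨0, by omega⟩, ⟨0, by omega⟩)

theorem dfa_inv (X : ℕ → Bool) (N Kc : ℕ) (n : ℕ) :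
    (pre X n).foldl (dfaD N Kc) (dfaQ0 N Kc) =
      (⟨min n N, by omega⟩, ⟨min (trun X n) Kc, by omega⟩) := by
  induction n with
  | zero =>
    have h0 : pre X 0 = [] := rfl
    rw [h0]
    simp only [List.foldl_nil, dfaQ0, Prod.ext_iff, Fin.ext_iff, trun_zero]
    omega
  | succ n ih =>
    rw [pre_succ, List.foldl_append, ih]
    simp only [List.foldl_cons, List.foldl_nil]
    cases hX : X n with
    | true =>
      simp only [dfaD, trun_succ, hX, cond_true, Prod.ext_iff, Fin.ext_iff]
      omega
    | false =>
      simp only [dfaD, trun_succ, hX, cond_false, Prod.ext_iff, Fin.ext_iff]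
      omega

end SCTR

theorem strictlyChaitinTRandom_finiteStateStronglyPredictable
    (U : List Bool →. List Bool) (hU : IsOptimalMachine U)
    (T : ℝ) (hT0 : 0 < T) (hT1 : T < 1) (X : ℕ → Bool)
    (h : StrictlyChaitinTRandom U T X) :
    FiniteStateStronglyPredictable X := by
  classical
  obtain ⟨K, hK⟩ := SCTR.run_bound hU hT0 h
  by_cases hz : {n : ℕ | X n = false}.Finite
  · -- Case 1: finitely many zeros; eventually predict `true` always.
    obtain ⟨N₀, hN₀⟩ := hz.bddAbove
    set N := N₀ + 1 with hNdef
    have htrue : ∀ n, N ≤ n → X n = true := by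
      intro n hn
      cases hX : X n with
      | true => rfl
      | false =>
        have : n ≤ N₀ := hN₀ hX
        omega
    have hlt1 : ∀ m : ℕ, min m N < N + 1 := fun m => by omega
    have hinv : ∀ n, (pre X n).foldl
        (fun (s : Fin (N + 1)) (_ : Bool) => (⟨min (s.val + 1) N, hlt1 _⟩ : Fin (N + 1)))
        ⟨min 0 N, hlt1 _⟩ = ⟨min n N, hlt1 _⟩ := by
      intro n
      induction n with
      | zero => rfl
      | succ n ih =>
        rw [SCTR.pre_succ, List.foldl_append, ih]
        simp only [List.foldl_cons, List.foldl_nil]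
        apply Fin.ext
        show min (min n N + 1) N = min (n + 1) N
        omega
    refine ⟨Fin (N + 1), inferInstance,
      fun s _ => ⟨min (s.val + 1) N, hlt1 _⟩, ⟨min 0 N, hlt1 _⟩,
      fun s => if s.val = N then some true else none, ?_, ?_⟩
    · intro n b hb
      rw [hinv n] at hb
      beta_reduce at hb
      split at hb
      · next hcond =>
        have hcond' : min n N = N := hcond
        simp only [Option.some.injEq] at hb
        rw [htrue n (by omega), ← hb]
      · exact absurd hb (by simp)
    · refine Set.Infinite.mono ?_ (Set.Ici_infinite N)
      intro n hn
      have hn' : N ≤ n := hn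
      simp only [Set.mem_setOf_eq]
      rw [hinv n]
      beta_reduce
      rw [if_pos (show (⟨min n N, hlt1 _⟩ : Fin (N + 1)).val = N by
        show min n N = N; omega)]
      simp
  · -- Case 2: infinitely many zeros.
    have hone : ∀ n : ℕ, ∃ m, n < m ∧ X m = true := by
      intro n
      by_contra hno
      push_neg at hno
      have hrun : ∀ i < K + 1, X ((n + 1) + i) = false := by
        intro i _
        cases hX : X (n + 1 + i) with
        | false => rfl
        | true => exact absurd hX (hno _ (by omega))
      have := hK (n + 1) (K + 1) (by omega) hrun
      omega
    have htle : ∀ n, SCTR.trun X n ≤ K + 1 := SCTR.trun_le hK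
    set S : ℕ → Set ℕ := fun v => {n | X n = true ∧ SCTR.trun X n = v} with hS
    have hOnes : {n : ℕ | X n = true}.Infinite := by
      apply Set.infinite_of_not_bddAbove
      rintro ⟨b, hb⟩
      obtain ⟨m, hm, hXm⟩ := hone b
      have := hb (show m ∈ {n : ℕ | X n = true} from hXm)
      omega
    have hex : ∃ v, v ≤ K + 1 ∧ (S v).Infinite := by
      by_contra hno
      push_neg at hno
      have hsub : {n : ℕ | X n = true} ⊆ ⋃ v ∈ Finset.range (K + 2), S v := by
        intro n hn
        simp only [Set.mem_iUnion]
        exact ⟨SCTR.trun X n, Finset.mem_range.mpr (by have := htle n; omega), hn, rfl⟩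
      have hfin : (⋃ v ∈ Finset.range (K + 2), S v).Finite :=
        Set.Finite.biUnion (Finset.range (K + 2)).finite_toSet
          (fun v hv => (hno v (by
            simp only [Finset.mem_coe, Finset.mem_range] at hv; omega)))
      exact hOnes (hfin.subset hsub)
    obtain ⟨v₀, hv₀le, hv₀⟩ := hex
    set k := Nat.findGreatest (fun v => (S v).Infinite) (K + 1) with hkdef
    have hkinf : (S k).Infinite := Nat.findGreatest_spec (P := fun v => (S v).Infinite) hv₀le hv₀
    have hkle : k ≤ K + 1 := Nat.findGreatest_le (P := fun v => (S v).Infinite) _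
    have hkmax : ∀ v, k < v → v ≤ K + 1 → (S v).Finite := fun v h1 h2 =>
      Set.not_infinite.mp (Nat.findGreatest_is_greatest (P := fun v => (S v).Infinite) h1 h2)
    have hB : (⋃ v ∈ Finset.Icc (k + 1) (K + 1), S v).Finite :=
      Set.Finite.biUnion (Finset.Icc (k + 1) (K + 1)).finite_toSet
        (fun v hv => by
          simp only [Finset.mem_coe, Finset.mem_Icc] at hv
          exact hkmax v (by omega) hv.2)
    obtain ⟨N₀, hN₀⟩ := hB.bddAbove
    set N := N₀ + 1 with hNdef
    have hbad : ∀ n v, k < v → v ≤ K + 1 → n ∈ S v → n < N := by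
      intro n v h1 h2 hn
      have hmem : n ∈ ⋃ v ∈ Finset.Icc (k + 1) (K + 1), S v := by
        simp only [Set.mem_iUnion]
        exact ⟨v, by simp only [Finset.mem_Icc]; omega, hn⟩
      have := hN₀ hmem
      omega
    refine ⟨Fin (N + 1) × Fin (K + 2 + 1), inferInstance,
      SCTR.dfaD N (K + 2), SCTR.dfaQ0 N (K + 2),
      fun s => if s.1.val = N ∧ s.2.val = k then some true else none, ?_, ?_⟩
    · intro n b hb
      rw [SCTR.dfa_inv X N (K + 2) n] at hb
      beta_reduce at hb
      have hb' : (if min n N = N ∧ min (SCTR.trun X n) (K + 2) = k then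
          (some true : Option Bool) else none) = some b := hb
      by_cases hcond : min n N = N ∧ min (SCTR.trun X n) (K + 2) = k
      · obtain ⟨hc1', hc2'⟩ := hcond
        rw [if_pos ⟨hc1', hc2'⟩] at hb'
        have hb : (some true : Option Bool) = some b := hb'
        have hnN : N ≤ n := by omega
        have htn : SCTR.trun X n = k := by omega
        simp only [Option.some.injEq] at hb
        have hXn : X n = true := by
          by_contra hne
          have hXnf : X n = false := by
            cases hX : X n with
            | true => exact absurd hX hne
            | false => rfl
          obtain ⟨m, hm, hXm⟩ := hone n
          have hexl : ∃ i, 0 < i ∧ X (n + i) = true :=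
            ⟨m - n, by omega, by rw [show n + (m - n) = m by omega]; exact hXm⟩
          obtain ⟨hl0, hlX⟩ := Nat.find_spec hexl
          set ℓ := Nat.find hexl with hldef
          have hlmin : ∀ i < ℓ, X (n + i) = false := by
            intro i hi
            cases hX : X (n + i) with
            | false => rfl
            | true =>
              rcases Nat.eq_zero_or_pos i with h0 | hpos
              · rw [h0, Nat.add_zero] at hX
                exact absurd hX hne
              · exact absurd ⟨hpos, hX⟩ (Nat.find_min hexl hi)
          have hchain := SCTR.trun_chain hlmin ℓ le_rfl
          have hmem2 : (n + ℓ) ∈ S (k + ℓ) := ⟨hlX, by rw [hchain, htn]⟩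
          have hle2 : k + ℓ ≤ K + 1 := by
            have := htle (n + ℓ)
            rw [hchain, htn] at this
            exact this
          have := hbad (n + ℓ) (k + ℓ) (by omega) hle2 hmem2
          omega
        rw [hXn]
        exact hb.symm
      · rw [if_neg hcond] at hb'
        exact absurd hb' (by simp)
    · refine Set.Infinite.mono ?_ (hkinf.diff (Set.finite_Iio N))
      intro n hn
      obtain ⟨hnS, hge⟩ := hn
      obtain ⟨hXn, htn⟩ := hnS
      have hge' : N ≤ n := by
        simp only [Set.mem_Iio, not_lt] at hge
        exact hge
      simp only [Set.mem_setOf_eq]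
      rw [SCTR.dfa_inv X N (K + 2) n]
      beta_reduce
      rw [if_pos (show (⟨min n N, by omega⟩ : Fin (N + 1)).val = N ∧
          (⟨min (SCTR.trun X n) (K + 2), by omega⟩ : Fin (K + 2 + 1)).val = k by
        constructor
        · show min n N = N; omega
        · show min (SCTR.trun X n) (K + 2) = k; omega)]
      simp
end

section
/- If an infinite binary sequence X has bounded runs of zeros (there is d ≥ 2 such that X contains no run of d consecutive zeros) and X contains infinitely many zeros, then X is finite-state strongly predictable. -/
/-- Length of the run of zeros of `X` ending just before position `n`. -/
def zrun (X : ℕ → Bool) : ℕ → ℕ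
  | 0 => 0
  | n+1 => if X n then 0 else zrun X n + 1

lemma zrun_succ (X : ℕ → Bool) (n : ℕ) :
    zrun X (n+1) = if X n then 0 else zrun X n + 1 := rfl

lemma zrun_le (X : ℕ → Bool) : ∀ n, zrun X n ≤ n
  | 0 => le_refl 0
  | n+1 => by
    rw [zrun_succ]
    split
    · omega
    · have := zrun_le X n; omega

lemma zrun_false (X : ℕ → Bool) : ∀ n, ∀ i, n - zrun X n ≤ i → i < n → X i = false := by
  intro n
  induction n with
  | zero => intro i h1 h2; omega
  | succ n ih =>
    intro i h1 h2
    by_cases hx : X n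
    · rw [zrun_succ, if_pos hx] at h1; omega
    · simp only [Bool.not_eq_true] at hx
      rcases Nat.lt_succ_iff_lt_or_eq.mp h2 with h | h
      · refine ih i ?_ h
        rw [zrun_succ, if_neg (by simp [hx])] at h1
        omega
      · exact h ▸ hx

lemma zrun_ge (X : ℕ → Bool) (m : ℕ) :
    ∀ j, (∀ i, m ≤ i → i < m + j → X i = false) → j ≤ zrun X (m + j) := by
  intro j
  induction j with
  | zero => intro _; omega
  | succ j ih =>
    intro h
    have hx : X (m + j) = false := h _ (by omega) (by omega)
    have hmj : m + (j+1) = (m+j) + 1 := by omega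
    rw [hmj, zrun_succ, if_neg (by simp [hx])]
    have := ih (fun i h1 h2 => h i h1 (by omega))
    omega

def autoδ (N k : ℕ) (s : Fin (N+1) × Fin (k+1)) (b : Bool) : Fin (N+1) × Fin (k+1) :=
  (⟨min (s.1.1+1) N, by omega⟩, if b then ⟨0, by omega⟩ else ⟨min (s.2.1+1) k, by omega⟩)

def autof (N k : ℕ) (s : Fin (N+1) × Fin (k+1)) : Option Bool :=
  if s.1.1 = N ∧ s.2.1 = k then some true else none

lemma pre_succ (X : ℕ → Bool) (n : ℕ) : pre X (n+1) = pre X n ++ [X n] := by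
  simp [pre, List.range_succ]

lemma auto_state (X : ℕ → Bool) (N k : ℕ) (n : ℕ) :
    (pre X n).foldl (autoδ N k) (⟨0, by omega⟩, ⟨0, by omega⟩) =
      (⟨min n N, by omega⟩, ⟨min (zrun X n) k, by omega⟩) := by
  induction n with
  | zero => simp [pre, zrun]
  | succ n ih =>
    rw [pre_succ, List.foldl_append, ih]
    simp only [List.foldl_cons, List.foldl_nil]
    by_cases hx : X n
    · simp only [autoδ, hx, if_true, zrun_succ, Prod.ext_iff, Fin.ext_iff]
      constructor <;> omega
    · simp only [Bool.not_eq_true] at hx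
      simp only [autoδ, hx, Bool.false_eq_true, if_false, zrun_succ, Prod.ext_iff, Fin.ext_iff]
      constructor <;> omega

theorem bounded_runs_finiteStateStronglyPredictable (X : ℕ → Bool)
    (d : ℕ) (hd : 2 ≤ d)
    (hruns : ∀ n₀ : ℕ, ∃ i < d, X (n₀ + i) = true)
    (hzeros : {n : ℕ | X n = false}.Infinite) :
    FiniteStateStronglyPredictable X := by
  classical
  set P : ℕ → Prop := fun j => {m : ℕ | ∀ i < j, X (m + i) = false}.Infinite with hPdef
  have hP1 : P 1 := by
    refine hzeros.mono ?_
    intro m hm i hi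
    have : i = 0 := by omega
    simpa [this] using hm
  set k := Nat.findGreatest P (d-1) with hkdef
  have hk1 : 1 ≤ k := Nat.le_findGreatest (by omega) hP1
  have hkd : k ≤ d - 1 := Nat.findGreatest_le _
  have hSk : P k := Nat.findGreatest_spec (m := 1) (by omega) hP1
  have hSk1 : ¬ P (k+1) := by
    rcases Nat.lt_or_ge k (d-1) with h | h
    · exact Nat.findGreatest_is_greatest (n := d-1) (by omega) (by omega)
    · intro hinf
      obtain ⟨m, hm⟩ := hinf.nonempty
      obtain ⟨i, hi, hxi⟩ := hruns m
      have hkd' : k + 1 = d := by omega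
      have := hm i (by omega)
      simp [this] at hxi
  have hfin : {m : ℕ | ∀ i < k+1, X (m + i) = false}.Finite := Set.not_infinite.mp hSk1
  obtain ⟨B, hB⟩ := hfin.bddAbove
  set N := B + 1 + k with hNdef
  refine ⟨Fin (N+1) × Fin (k+1), inferInstance, autoδ N k,
    (⟨0, by omega⟩, ⟨0, by omega⟩), autof N k, ?_, ?_⟩
  · intro n b hb
    rw [auto_state] at hb
    simp only [autof] at hb
    split_ifs at hb with h
    · obtain ⟨h1, h2⟩ := h
      have hn : N ≤ n := by omega
      have hz : k ≤ zrun X n := by omega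
      have hzn : zrun X n ≤ n := zrun_le X n
      have hb' : b = true := by simpa using hb.symm
      subst hb'
      by_contra hxn
      have hxn' : X n = false := by
        cases hXn : X n
        · rfl
        · exact absurd hXn.symm hxn
      have hmem : (n - k) ∈ {m : ℕ | ∀ i < k+1, X (m + i) = false} := by
        intro i hi
        rcases Nat.lt_succ_iff_lt_or_eq.mp hi with h' | h'
        · exact zrun_false X n _ (by omega) (by omega)
        · subst h'
          have : n - k + k = n := by omega
          rw [this]; exact hxn'
      have := hB hmem
      omega
  · have hinj : Set.InjOn (fun m => m + k)
        ({m : ℕ | ∀ i < k, X (m + i) = false} \ {m | m < N}) := by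
      intro a _ b _ h; simpa using h
    have hinf : ({m : ℕ | ∀ i < k, X (m + i) = false} \ {m | m < N}).Infinite :=
      hSk.diff (Set.finite_lt_nat N)
    refine (hinf.image hinj).mono ?_
    rintro n ⟨m, ⟨hm, hmN⟩, rfl⟩
    simp only [Set.mem_setOf_eq, Set.mem_setOf_eq, not_lt] at hmN ⊢
    rw [auto_state]
    simp only [autof]
    have hz : k ≤ zrun X (m + k) := by
      refine zrun_ge X m k ?_
      intro i h1 h2
      have := hm (i - m) (by omega)
      rwa [show m + (i - m) = i by omega] at this
    rw [if_pos ⟨by omega, by omega⟩]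
    simp
end

section
/- For every real T > 1, the series Z(T) = Σ_{p ∈ dom U} 2^{-|p|/T} diverges to infinity. -/
/-- Auxiliary: condition for membership in the domain of the auxiliary machine. -/
def ZTcond (m : ℕ) (p : List Bool) : Bool :=
  (m+1) * (p.findIdx (fun b => !b)) + 1 == p.length

/-- Auxiliary machine used to pump many programs into the domain of `U`. -/
def ZTmach (m : ℕ) : List Bool →. List Bool :=
  fun p => bif ZTcond m p then Part.some p else Part.none

lemma ZT_findIdx_append_of_lt {α : Type*} (pr : α → Bool) :
    ∀ (l r : List α), l.findIdx pr < l.length → (l ++ r).findIdx pr = l.findIdx pr := by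
  intro l
  induction l with
  | nil => intro r h; simp at h
  | cons a t ih =>
    intro r h
    rw [List.cons_append, List.findIdx_cons, List.findIdx_cons]
    cases hpa : pr a
    · simp only [cond_false]
      rw [List.findIdx_cons, hpa, cond_false] at h
      simp only [List.length_cons] at h
      rw [ih r (by omega)]
    · simp

lemma ZT_findIdx_repl (j : ℕ) (x : List Bool) :
    (List.replicate j true ++ false :: x).findIdx (fun b => !b) = j := by
  induction j with
  | zero => simp [List.findIdx_cons]
  | succ k ih => simp [List.replicate_succ, List.findIdx_cons, ih]

lemma ZTmach_eq_some {m : ℕ} {p : List Bool} (h : ZTcond m p = true) :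
    ZTmach m p = Part.some p := by simp [ZTmach, h]

lemma ZTcond_of_dom {m : ℕ} {p : List Bool} (h : (ZTmach m p).Dom) :
    ZTcond m p = true := by
  by_contra hc
  rw [Bool.not_eq_true] at hc
  simp [ZTmach, hc] at h

lemma ZTmach_partrec (m : ℕ) : Partrec (ZTmach m) := by
  have h1 : Primrec (fun p : List Bool => p.findIdx (fun b => !b)) :=
    Primrec.list_findIdx Primrec.id
      (((Primrec.dom_bool not).comp Primrec.snd).to₂)
  have h2 : Primrec (fun p : List Bool => (m+1) * p.findIdx (fun b => !b) + 1) :=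
    Primrec.succ.comp (Primrec.nat_mul.comp (Primrec.const (m+1)) h1)
  have hc : Computable (ZTcond m) :=
    (Primrec.beq.comp h2 Primrec.list_length).to_comp
  exact Partrec.cond hc Computable.id.partrec Partrec.none

lemma ZTmach_prefixFree (m : ℕ) : IsPrefixFreeMachine (ZTmach m) := by
  refine ⟨ZTmach_partrec m, ?_⟩
  intro p q hp hq hpq
  have cp := ZTcond_of_dom hp
  have cq := ZTcond_of_dom hq
  rw [ZTcond, beq_iff_eq] at cp cq
  obtain ⟨r, rfl⟩ := hpq
  have hle : p.findIdx (fun b => !b) ≤ (m+1) * p.findIdx (fun b => !b) :=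
    Nat.le_mul_of_pos_left _ (Nat.succ_pos m)
  have hlt : p.findIdx (fun b => !b) < p.length := by omega
  rw [ZT_findIdx_append_of_lt _ p r hlt, List.length_append] at cq
  have hr : r.length = 0 := by omega
  rw [List.length_eq_zero_iff.mp hr, List.append_nil]

theorem ZT_diverges_above_one
    (U : List Bool →. List Bool) (hU : IsOptimalMachine U)
    (T : ℝ) (hT : 1 < T) :
    ¬ Summable (fun p : {p : List Bool // (U p).Dom} =>
      (2 : ℝ) ^ (-((p.1.length : ℝ)) / T)) := by
  intro hsum
  obtain ⟨⟨hUpart, hUpf⟩, hopt⟩ := hU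
  have hT0 : (0:ℝ) < T := lt_trans one_pos hT
  obtain ⟨n₀, hn₀⟩ := exists_nat_one_div_lt (sub_pos.mpr hT)
  set m : ℕ := n₀ + 1 with hm_def
  have hm : (1:ℝ)/(m:ℝ) < T - 1 := by push_cast [hm_def]; exact hn₀
  have hmpos : (0:ℝ) < (m:ℝ) := by positivity
  have hslope : (0:ℝ) < (m:ℝ) - ((m:ℝ)+1)/T := by
    rw [sub_pos, div_lt_iff₀ hT0]
    have := (div_lt_iff₀ hmpos).mp hm
    nlinarith
  obtain ⟨d, hd⟩ := hopt (ZTmach m) (ZTmach_prefixFree m)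
  -- For each `j` and each bit vector `v` of length `m*j`, build a program in dom U.
  set pL : ∀ j : ℕ, (Fin (m*j) → Bool) → List Bool :=
    fun j v => List.replicate j true ++ false :: List.ofFn v with hpL
  have hpLlen : ∀ j v, (pL j v).length = (m+1)*j + 1 := by
    intro j v
    simp [hpL, List.length_append, List.length_replicate, List.length_ofFn]
    ring
  have hcond : ∀ j v, ZTcond m (pL j v) = true := by
    intro j v
    rw [ZTcond, beq_iff_eq, hpL]
    rw [ZT_findIdx_repl]
    have := hpLlen j v
    rw [hpL] at this
    omega
  have hdom : ∀ j v, (ZTmach m (pL j v)).Dom := by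
    intro j v
    rw [ZTmach_eq_some (hcond j v)]
    trivial
  choose Q hQlen hQU using fun (j : ℕ) (v : Fin (m*j) → Bool) => hd (pL j v) (hdom j v)
  have hQU' : ∀ j v, U (Q j v) = Part.some (pL j v) := by
    intro j v
    rw [hQU j v, ZTmach_eq_some (hcond j v)]
  have hQdom : ∀ j v, (U (Q j v)).Dom := by
    intro j v; rw [hQU' j v]; trivial
  set g : ∀ j : ℕ, (Fin (m*j) → Bool) → {p : List Bool // (U p).Dom} :=
    fun j v => ⟨Q j v, hQdom j v⟩ with hg
  have hginj : ∀ j, Function.Injective (g j) := by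
    intro j v v' hvv'
    have hq : Q j v = Q j v' := congrArg Subtype.val hvv'
    have : Part.some (pL j v) = Part.some (pL j v') := by
      rw [← hQU' j v, ← hQU' j v', hq]
    have hpl : pL j v = pL j v' := by simpa using this
    rw [hpL] at hpl
    have := List.append_cancel_left hpl
    have := List.cons.injEq false (List.ofFn v) false (List.ofFn v') ▸ this
    have hofn : List.ofFn v = List.ofFn v' := by
      simpa using this
    exact funext fun i => by
      have := congrArg (fun l => l.head?) hofn
      have h2 := List.ofFn_injective hofn
      exact congrFun h2 i
  set f : {p : List Bool // (U p).Dom} → ℝ :=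
    fun p => (2 : ℝ) ^ (-((p.1.length : ℝ)) / T) with hf
  set S : ℝ := ∑' p, f p with hS
  set L : ℕ → ℕ := fun j => (m+1)*j + 1 + d with hL
  have key : ∀ j : ℕ, (2:ℝ)^(((m*j : ℕ) : ℝ)) * (2:ℝ) ^ (-((L j : ℕ) : ℝ) / T) ≤ S := by
    intro j
    set s : Finset {p : List Bool // (U p).Dom} := Finset.univ.image (g j) with hs
    have hcard : s.card = 2 ^ (m*j) := by
      rw [hs, Finset.card_image_of_injective _ (hginj j), Finset.card_univ]
      simp [Fintype.card_fun]
    have hbound : ∀ i ∈ s, (2:ℝ) ^ (-((L j : ℕ) : ℝ) / T) ≤ f i := by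
      intro i hi
      obtain ⟨v, -, rfl⟩ := Finset.mem_image.mp hi
      rw [hf]
      apply Real.rpow_le_rpow_of_exponent_le one_le_two
      have hlen : (Q j v).length ≤ L j := by
        have := hQlen j v
        rw [hpLlen j v] at this
        exact this
      have hlen' : ((g j v).1.length : ℝ) ≤ ((L j : ℕ) : ℝ) := by
        exact_mod_cast hlen
      rw [div_le_div_iff₀ hT0 hT0]
      nlinarith
    have h2 : (s.card : ℝ) * (2:ℝ) ^ (-((L j : ℕ) : ℝ) / T) ≤ ∑ i ∈ s, f i := by
      have := Finset.card_nsmul_le_sum s f _ hbound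
      rwa [nsmul_eq_mul] at this
    have h3 : ∑ i ∈ s, f i ≤ S := by
      rw [hS]
      exact Summable.sum_le_tsum s (fun i _ => Real.rpow_nonneg (by norm_num) _) hsum
    calc (2:ℝ)^(((m*j : ℕ) : ℝ)) * (2:ℝ) ^ (-((L j : ℕ) : ℝ) / T)
        = (s.card : ℝ) * (2:ℝ) ^ (-((L j : ℕ) : ℝ) / T) := by
          rw [hcard, Nat.cast_pow, Nat.cast_ofNat, ← Real.rpow_natCast (2:ℝ) (m*j)]
      _ ≤ ∑ i ∈ s, f i := h2
      _ ≤ S := h3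
  -- the left side tends to infinity, contradiction
  have hexp : ∀ j : ℕ, (2:ℝ)^(((m*j : ℕ) : ℝ)) * (2:ℝ) ^ (-((L j : ℕ) : ℝ) / T)
      = (2:ℝ) ^ ((((m:ℝ) - ((m:ℝ)+1)/T)) * (j:ℝ) - ((1:ℝ)+(d:ℝ))/T) := by
    intro j
    rw [← Real.rpow_add (by norm_num : (0:ℝ) < 2)]
    congr 1
    rw [hL]
    push_cast
    field_simp
    ring
  have htend : Filter.Tendsto
      (fun j : ℕ => (2:ℝ) ^ ((((m:ℝ) - ((m:ℝ)+1)/T)) * (j:ℝ) - ((1:ℝ)+(d:ℝ))/T))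
      Filter.atTop Filter.atTop := by
    have h2x : Filter.Tendsto (fun x : ℝ => (2:ℝ) ^ x) Filter.atTop Filter.atTop := by
      have : ∀ x : ℝ, (2:ℝ) ^ x = Real.exp (Real.log 2 * x) := fun x =>
        Real.rpow_def_of_pos (by norm_num) x
      simp_rw [this]
      exact Real.tendsto_exp_atTop.comp
        ((Filter.tendsto_const_mul_atTop_of_pos (Real.log_pos (by norm_num))).mpr
          Filter.tendsto_id)
    apply h2x.comp
    apply Filter.tendsto_atTop_add_const_right
    exact (Filter.tendsto_const_mul_atTop_of_pos hslope).mpr tendsto_natCast_atTop_atTop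
  obtain ⟨j, hj⟩ := (htend.eventually (Filter.eventually_gt_atTop S)).exists
  have := key j
  rw [hexp j] at this
  exact absurd this (not_le.mpr hj)
end

section
/- Given a total computable predictor F : {0,1}* → {0,1,N} for X satisfying the total strong predictability conditions, the function B defined recursively by B(λ)=1, B(x0) = B(x) if F(x)=N, B(x0) = 2B(x) if F(x)=0, B(x0) = 0 if F(x)=1, and B(x1) = 2B(x) − B(x0), is a computable martingale satisfying B(X↾n) = 2^{#{m < n : F(X↾m) ≠ N}} for all n. -/
section PMaux

def bstep (F : List Bool → Option Bool) (x : List Bool) (v : ℕ) (b : Bool) : ℕ :=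
  (fun w => cond b (2*v - w) w) ((F x).casesOn v (fun c => cond c 0 (2*v)))

def btake (l : List Bool) (n : ℕ) : List Bool := (List.range n).map (fun i => l.getD i false)

lemma btake_eq (l : List Bool) (n : ℕ) (h : n ≤ l.length) : btake l n = l.take n := by
  apply List.ext_getElem
  · simp [btake]; omega
  · intro i h1 h2
    simp only [btake, List.length_map, List.length_range] at h1
    simp [btake, List.getD_eq_getElem l false (by omega : i < l.length),
      List.getElem?_eq_getElem (by omega : i < l.length)]

def bgo (F : List Bool → Option Bool) (l : List Bool) : ℕ :=
  Nat.rec 1 (fun n v => bstep F (btake l n) v (l.getD n false)) l.length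

lemma bgo_computable (F : List Bool → Option Bool) (hF : Computable F) :
    Computable (bgo F) := by
  have htake : Computable₂ btake := by
    have : Primrec₂ btake := by
      unfold btake
      exact (Primrec.list_map (Primrec.list_range.comp Primrec.snd)
        (Primrec.to₂ ((Primrec.list_getD false).comp (Primrec.fst.comp Primrec.fst)
          Primrec.snd))).to₂
    exact Primrec₂.to_comp this
  have hgetD : Computable₂ (fun (l : List Bool) (n : ℕ) => l.getD n false) :=
    Primrec₂.to_comp (Primrec.list_getD false)
  have hstep : Computable₂ (fun (l : List Bool) (p : ℕ × ℕ) =>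
      bstep F (btake l p.1) p.2 (l.getD p.1 false)) := by
    show Computable (fun q : List Bool × (ℕ × ℕ) =>
      bstep F (btake q.1 q.2.1) q.2.2 (q.1.getD q.2.1 false))
    have hx : Computable (fun q : List Bool × (ℕ × ℕ) => btake q.1 q.2.1) :=
      htake.comp .fst (Computable.fst.comp .snd)
    have hv : Computable (fun q : List Bool × (ℕ × ℕ) => q.2.2) :=
      Computable.snd.comp .snd
    have hb : Computable (fun q : List Bool × (ℕ × ℕ) => q.1.getD q.2.1 false) :=
      hgetD.comp .fst (Computable.fst.comp .snd)
    have h2v : Computable (fun q : List Bool × (ℕ × ℕ) => 2 * q.2.2) :=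
      (Primrec.nat_mul.comp (Primrec.const 2) Primrec.id).to_comp.comp hv
    have hw : Computable (fun q : List Bool × (ℕ × ℕ) =>
        ((F (btake q.1 q.2.1)).casesOn q.2.2 (fun c => cond c 0 (2*q.2.2)) : ℕ)) := by
      exact Computable.option_casesOn (hF.comp hx) hv
        (Computable.cond Computable.snd (Computable.const 0) (h2v.comp Computable.fst))
    have hsub : Computable (fun q : List Bool × (ℕ × ℕ) =>
        2 * q.2.2 - ((F (btake q.1 q.2.1)).casesOn q.2.2 (fun c => cond c 0 (2*q.2.2)) : ℕ)) :=
      (Primrec₂.to_comp Primrec.nat_sub).comp h2v hw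
    exact (Computable.cond hb hsub hw).of_eq fun q => by
      simp [bstep]
  exact (Computable.nat_rec Primrec.list_length.to_comp (Computable.const 1) hstep).of_eq
    fun l => rfl

end PMaux

theorem predictor_martingale (X : ℕ → Bool) (F : List Bool → Option Bool)
    (hFcomp : Computable F)
    (hFcorrect : ∀ n b, F (pre X n) = some b → b = X n)
    (B : List Bool → ℕ)
    (hB₀ : B [] = 1)
    (hBzero : ∀ x : List Bool, B (x ++ [false]) =
      match F x with
      | none => B x
      | some false => 2 * B x
      | some true => 0)
    (hBone : ∀ x : List Bool, B (x ++ [true]) = 2 * B x - B (x ++ [false])) :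
    IsMartingale (fun x => (B x : ℝ)) ∧ Computable B ∧
      ∀ n : ℕ, B (pre X n) =
        2 ^ ((Finset.range n).filter (fun m => F (pre X m) ≠ none)).card := by
  -- key: B (x ++ [b]) = bstep F x (B x) b
  have hstepB : ∀ (x : List Bool) (b : Bool), B (x ++ [b]) = bstep F x (B x) b := by
    intro x b
    have hz : B (x ++ [false]) = ((F x).casesOn (B x) (fun c => cond c 0 (2*(B x))) : ℕ) := by
      rw [hBzero]; cases h : F x with
      | none => rfl
      | some c => cases c <;> rfl
    cases b with
    | false => simpa [bstep] using hz
    | true => rw [hBone, hz]; rfl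
  have hBle : ∀ x : List Bool, B (x ++ [false]) ≤ 2 * B x := by
    intro x; rw [hBzero]; cases h : F x with
    | none => show B x ≤ 2 * B x; omega
    | some c =>
      cases c
      · show 2 * B x ≤ 2 * B x; omega
      · show 0 ≤ 2 * B x; omega
  refine ⟨⟨fun x => by positivity, fun x => ?_⟩, ?_, ?_⟩
  · have h1 := hBone x
    have h2 := hBle x
    push_cast [h1, Nat.cast_sub h2]
    ring
  · -- Computable B
    apply (bgo_computable F hFcomp).of_eq
    intro l
    -- bgo F l = B l via induction
    suffices h : ∀ n ≤ l.length,
        (Nat.rec 1 (fun n v => bstep F (btake l n) v (l.getD n false)) n : ℕ) = B (l.take n) by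
      have := h l.length le_rfl
      simpa [bgo] using this
    intro n hn
    induction n with
    | zero => simpa using hB₀.symm
    | succ m ih =>
      have hm : m < l.length := by omega
      have htk : l.take (m+1) = l.take m ++ [l.getD m false] := by
        rw [List.getD_eq_getElem l false hm]
        rw [List.take_succ]
        simp [List.getElem?_eq_getElem hm]
      have hih := ih (by omega)
      rw [htk, hstepB, ← hih, ← btake_eq l m (by omega)]
  · intro n
    induction n with
    | zero =>
      rw [Finset.range_zero, Finset.filter_empty, Finset.card_empty, pow_zero]
      simpa [pre] using hB₀
    | succ m ih =>
      rw [pre_succ, hstepB, Finset.range_add_one]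
      by_cases h : F (pre X m) = none
      · rw [Finset.filter_insert, if_neg (by simpa using h)]
        rw [ih]
        cases hb : X m <;> simp [bstep, h] <;> try omega
      · rw [Finset.filter_insert, if_pos (by simpa using h)]
        rw [Finset.card_insert_of_notMem (by simp)]
        obtain ⟨c, hc⟩ := Option.ne_none_iff_exists'.mp h
        have hcX : c = X m := hFcorrect m c hc
        rw [ih]
        subst hcX
        cases hb : X m <;> simp [bstep, hc, hb] <;> ring_nf <;> try omega
end

section
/- Suppose H(x 0^c) ≤ H(x) + Tc − 1 for all strings x, where c ∈ ℕ+ and T ∈ (0,1) is real, and suppose X ∈ {0,1}^ω satisfies |H(X↾n) − Tn| ≤ d₀ for all n. Then X has no run of c·k₀ consecutive zeros for any integer k₀ > 2d₀. -/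
theorem no_long_zero_runs (H : List Bool → ℕ) (c : ℕ) (hc : 1 ≤ c)
    (T : ℝ) (hT0 : 0 < T) (hT1 : T < 1)
    (hH : ∀ x : List Bool, (H (x ++ List.replicate c false) : ℝ) ≤ (H x : ℝ) + T * c - 1)
    (X : ℕ → Bool) (d₀ : ℕ)
    (hX : ∀ n : ℕ, |(H (pre X n) : ℝ) - T * n| ≤ d₀)
    (k₀ : ℕ) (hk : 2 * d₀ < k₀) :
    ¬ ∃ n₀ : ℕ, ∀ i < c * k₀, X (n₀ + i) = false := by
  rintro ⟨n₀, hzero⟩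
  -- iterated bound
  have iter : ∀ k : ℕ, ∀ x : List Bool,
      (H (x ++ List.replicate (c * k) false) : ℝ) ≤ (H x : ℝ) + T * (c * k) - k := by
    intro k
    induction k with
    | zero => intro x; simp
    | succ k ih =>
      intro x
      have h1 : x ++ List.replicate (c * (k+1)) false
          = (x ++ List.replicate (c * k) false) ++ List.replicate c false := by
        rw [List.append_assoc, ← List.replicate_add]
        ring_nf
      rw [h1]
      have e : T * ((c * (k+1) : ℕ) : ℝ) = T * ((c * k : ℕ) : ℝ) + T * c := by
        push_cast; ring
      have h3 := hH (x ++ List.replicate (c * k) false)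
      have h4 := ih x
      push_cast at *
      linarith
  -- pre decomposition
  have hpre : pre X (n₀ + c * k₀) = pre X n₀ ++ List.replicate (c * k₀) false := by
    unfold pre
    rw [List.range_add, List.map_append, List.map_map]
    congr 1
    apply List.ext_getElem
    · simp
    · intro i h1 h2
      simp only [List.getElem_map, List.getElem_range, List.getElem_replicate,
        Function.comp_apply]
      exact hzero i (by simpa using h1)
  have h2 := iter k₀ (pre X n₀)
  rw [← hpre] at h2
  have hlow := hX (n₀ + c * k₀)
  have hhigh := hX n₀
  rw [abs_le] at hlow hhigh
  have : (k₀ : ℝ) ≤ 2 * d₀ := by push_cast at *; linarith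
  have : (2 * d₀ : ℝ) < k₀ := by exact_mod_cast hk
  linarith
end
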